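/- arXiv:math/0302215 — 9 statements merged into one kernel-verified Lean document; each statement's English description precedes it below -/
import Mathlib

section
/- Let f : ℝ → ℝ be a 3-nice function on an open interval I, with the three zeros of f denoted x₁ < x₂ < x₃, the two zeros of f' denoted y₁ < y₂, and the unique zero of f'' denoted z₁. Then the following inequalities hold: x₁ < y₁ < x₂ < y₂ < x₃; y₁ < z₁ < y₂; y₁ − x₁ < min(x₂ − y₁, √((z₁ − y₁)² + 2(z₁ − y₁)·|z₁ − x₂|)); and x₃ − y₂ < min(y₂ − x₂, √((y₂ − z₁)² + 2(y₂ − z₁)·|z₁ − x₂|)). -/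
open Set


lemma core_lemma (f f1 f2 : ℝ → ℝ) (I : Set ℝ) (hIconn : I.OrdConnected)
    (h1 : ∀ x ∈ I, HasDerivAt f (f1 x) x)
    (h2 : ∀ x ∈ I, HasDerivAt f1 (f2 x) x)
    (hmono : StrictMonoOn f2 I)
    (x₁ y₁ x₂ z₁ : ℝ)
    (hx₁I : x₁ ∈ I) (hy₁I : y₁ ∈ I) (hx₂I : x₂ ∈ I) (hz₁I : z₁ ∈ I)
    (h11 : x₁ < y₁) (h12 : y₁ < x₂) (h13 : y₁ < z₁)
    (hfx₁ : f x₁ = 0) (hfx₂ : f x₂ = 0) (hfy₁ : f1 y₁ = 0) (hfz₁ : f2 z₁ = 0) :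
    y₁ - x₁ < x₂ - y₁ ∧
    y₁ - x₁ < Real.sqrt ((z₁ - y₁) ^ 2 + 2 * (z₁ - y₁) * |z₁ - x₂|) := by
  have hsub : ∀ a b : ℝ, a ∈ I → b ∈ I → Icc a b ⊆ I := fun a b ha hb => hIconn.out ha hb
  have hcontf : ∀ s : Set ℝ, s ⊆ I → ContinuousOn f s := fun s hs x hx =>
    ((h1 x (hs hx)).continuousAt).continuousWithinAt
  have hcontf1 : ∀ s : Set ℝ, s ⊆ I → ContinuousOn f1 s := fun s hs x hx =>
    ((h2 x (hs hx)).continuousAt).continuousWithinAt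
  have hky : f2 y₁ < 0 := by have := hmono hy₁I hz₁I h13; rw [hfz₁] at this; linarith
  -- f1 positive strictly left of y₁ (within I)
  have hf1pos : ∀ t ∈ I, t < y₁ → 0 < f1 t := by
    intro t htI hty
    have hIcc : Icc t y₁ ⊆ I := hsub _ _ htI hy₁I
    have : StrictAntiOn f1 (Icc t y₁) := by
      apply strictAntiOn_of_deriv_neg (convex_Icc _ _) (hcontf1 _ hIcc)
      intro x hx
      rw [interior_Icc] at hx
      rw [(h2 x (hIcc (Ioo_subset_Icc_self hx))).deriv]
      have := hmono (hIcc (Ioo_subset_Icc_self hx)) hy₁I hx.2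
      linarith
    have := this (left_mem_Icc.2 hty.le) (right_mem_Icc.2 hty.le) hty
    rw [hfy₁] at this; linarith
  -- f strictly increasing on [x₁, y₁]
  have hfmono : StrictMonoOn f (Icc x₁ y₁) := by
    apply strictMonoOn_of_deriv_pos (convex_Icc _ _) (hcontf _ (hsub _ _ hx₁I hy₁I))
    intro x hx
    rw [interior_Icc] at hx
    rw [(h1 x (hsub _ _ hx₁I hy₁I (Ioo_subset_Icc_self hx))).deriv]
    exact hf1pos x (hsub _ _ hx₁I hy₁I (Ioo_subset_Icc_self hx)) hx.2
  have hfwnn : ∀ w ∈ Icc x₁ y₁, 0 ≤ f w := by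
    intro w hw
    rcases eq_or_lt_of_le hw.1 with h | h
    · rw [← h, hfx₁]
    · have := hfmono (left_mem_Icc.2 (hw.1.trans hw.2)) hw h
      rw [hfx₁] at this; linarith
  -- Part 1 : y₁ - x₁ < x₂ - y₁
  have part1 : y₁ - x₁ < x₂ - y₁ := by
    by_contra hcon
    push_neg at hcon
    have hw1 : x₁ ≤ 2 * y₁ - x₂ := by linarith
    have hrefl : ∀ t ∈ Icc y₁ x₂, 2 * y₁ - t ∈ I := by
      intro t ht
      exact hsub _ _ hx₁I hy₁I ⟨by linarith [ht.2], by linarith [ht.1]⟩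
    have hIccI : Icc y₁ x₂ ⊆ I := hsub _ _ hy₁I hx₂I
    -- G t = f1 t + f1 (2 y₁ - t) is strictly increasing on [y₁, x₂]
    have hGd : ∀ t ∈ Icc y₁ x₂,
        HasDerivAt (fun t => f1 t + f1 (2 * y₁ - t)) (f2 t - f2 (2 * y₁ - t)) t := by
      intro t ht
      have hc : HasDerivAt (fun t : ℝ => 2 * y₁ - t) (-1) t := by
        simpa using (hasDerivAt_id t).const_sub (2 * y₁)
      have := ((h2 _ (hrefl t ht)).comp t hc)
      have := (h2 t (hIccI ht)).add this
      exact this.congr_deriv (by ring)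
    have hGmono : StrictMonoOn (fun t => f1 t + f1 (2 * y₁ - t)) (Icc y₁ x₂) := by
      apply strictMonoOn_of_deriv_pos (convex_Icc _ _)
      · intro x hx
        exact ((hGd x hx).continuousAt).continuousWithinAt
      · intro x hx
        rw [interior_Icc] at hx
        rw [(hGd x (Ioo_subset_Icc_self hx)).deriv]
        have hlt : 2 * y₁ - x < x := by linarith [hx.1]
        have := hmono (hrefl x (Ioo_subset_Icc_self hx)) (hIccI (Ioo_subset_Icc_self hx)) hlt
        linarith
    have hGpos : ∀ t ∈ Ioc y₁ x₂, 0 < f1 t + f1 (2 * y₁ - t) := by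
      intro t ht
      have h' : f1 y₁ + f1 (2 * y₁ - y₁) < f1 t + f1 (2 * y₁ - t) :=
        hGmono (left_mem_Icc.2 h12.le) ⟨ht.1.le, ht.2⟩ ht.1
      rw [show 2 * y₁ - y₁ = y₁ by ring, hfy₁] at h'
      linarith
    -- H t = f (2 y₁ - t) - f t strictly decreasing on [y₁, x₂]
    have hHd : ∀ t ∈ Icc y₁ x₂,
        HasDerivAt (fun t => f (2 * y₁ - t) - f t) (-(f1 t + f1 (2 * y₁ - t))) t := by
      intro t ht
      have hc : HasDerivAt (fun t : ℝ => 2 * y₁ - t) (-1) t := by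
        simpa using (hasDerivAt_id t).const_sub (2 * y₁)
      have := ((h1 _ (hrefl t ht)).comp t hc).sub (h1 t (hIccI ht))
      exact this.congr_deriv (by ring)
    have hHanti : StrictAntiOn (fun t => f (2 * y₁ - t) - f t) (Icc y₁ x₂) := by
      apply strictAntiOn_of_deriv_neg (convex_Icc _ _)
      · intro x hx
        exact ((hHd x hx).continuousAt).continuousWithinAt
      · intro x hx
        rw [interior_Icc] at hx
        rw [(hHd x (Ioo_subset_Icc_self hx)).deriv]
        have := hGpos x ⟨hx.1, hx.2.le⟩
        linarith
    have h' : f (2 * y₁ - x₂) - f x₂ < f (2 * y₁ - y₁) - f y₁ :=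
      hHanti (left_mem_Icc.2 h12.le) (right_mem_Icc.2 h12.le) h12
    rw [show 2 * y₁ - y₁ = y₁ by ring, hfx₂] at h'
    have hge := hfwnn (2 * y₁ - x₂) ⟨hw1, by linarith⟩
    linarith
  refine ⟨part1, ?_⟩
  -- Part 2
  have hzy : (0:ℝ) < z₁ - y₁ := by linarith
  rcases le_or_gt x₂ z₁ with hcase | hcase
  · -- easy case : y₁ - x₁ < x₂ - y₁ ≤ z₁ - y₁ = √((z₁-y₁)²) ≤ √(...)
    have h1' : y₁ - x₁ < z₁ - y₁ := by linarith
    have h2' : z₁ - y₁ = Real.sqrt ((z₁ - y₁) ^ 2) := (Real.sqrt_sq hzy.le).symm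
    have h3' : Real.sqrt ((z₁ - y₁) ^ 2) ≤
        Real.sqrt ((z₁ - y₁) ^ 2 + 2 * (z₁ - y₁) * |z₁ - x₂|) := by
      apply Real.sqrt_le_sqrt
      have : 0 ≤ 2 * (z₁ - y₁) * |z₁ - x₂| := by positivity
      linarith
    linarith [h2' ▸ h1', h3']
  · -- hard case : z₁ < x₂
    set k : ℝ := -f2 y₁ with hkdef
    have hk0 : 0 < k := by rw [hkdef]; linarith
    set d : ℝ := z₁ - y₁ with hddef
    -- p1 t = f1 t + k * (t - y₁), derivative f2 t - f2 y₁
    have hp1d : ∀ t ∈ I, HasDerivAt (fun t => f1 t + k * (t - y₁)) (f2 t - f2 y₁) t := by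
      intro t ht
      have hc : HasDerivAt (fun t : ℝ => k * (t - y₁)) k t := by
        simpa using ((hasDerivAt_id t).sub_const y₁).const_mul k
      have he : f2 t - f2 y₁ = f2 t + k := by rw [hkdef]; ring
      rw [he]; exact (h2 t ht).add hc
    have hp1y : f1 y₁ + k * (y₁ - y₁) = 0 := by simp [hfy₁]
    -- p1 > 0 on I left of y₁
    have hp1pos_lt : ∀ t ∈ I, t < y₁ → 0 < f1 t + k * (t - y₁) := by
      intro t htI hty
      have hIcc : Icc t y₁ ⊆ I := hsub _ _ htI hy₁I
      have : StrictAntiOn (fun t => f1 t + k * (t - y₁)) (Icc t y₁) := by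
        apply strictAntiOn_of_deriv_neg (convex_Icc _ _)
        · intro x hx; exact ((hp1d x (hIcc hx)).continuousAt).continuousWithinAt
        · intro x hx
          rw [interior_Icc] at hx
          rw [(hp1d x (hIcc (Ioo_subset_Icc_self hx))).deriv]
          have := hmono (hIcc (Ioo_subset_Icc_self hx)) hy₁I hx.2
          linarith
      have h' : f1 y₁ + k * (y₁ - y₁) < f1 t + k * (t - y₁) :=
        this (left_mem_Icc.2 hty.le) (right_mem_Icc.2 hty.le) hty
      rw [hp1y] at h'; linarith
    have hp1pos_gt : ∀ t ∈ I, y₁ < t → 0 < f1 t + k * (t - y₁) := by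
      intro t htI hty
      have hIcc : Icc y₁ t ⊆ I := hsub _ _ hy₁I htI
      have : StrictMonoOn (fun t => f1 t + k * (t - y₁)) (Icc y₁ t) := by
        apply strictMonoOn_of_deriv_pos (convex_Icc _ _)
        · intro x hx; exact ((hp1d x (hIcc hx)).continuousAt).continuousWithinAt
        · intro x hx
          rw [interior_Icc] at hx
          rw [(hp1d x (hIcc (Ioo_subset_Icc_self hx))).deriv]
          have := hmono hy₁I (hIcc (Ioo_subset_Icc_self hx)) hx.1
          linarith
      have h' : f1 y₁ + k * (y₁ - y₁) < f1 t + k * (t - y₁) :=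
        this (left_mem_Icc.2 hty.le) (right_mem_Icc.2 hty.le) hty
      rw [hp1y] at h'; linarith
    -- p t = f t + k/2 * (t - y₁)^2
    have hpd : ∀ t ∈ I, HasDerivAt (fun t => f t + k / 2 * (t - y₁) ^ 2)
        (f1 t + k * (t - y₁)) t := by
      intro t ht
      have hc : HasDerivAt (fun t : ℝ => k / 2 * (t - y₁) ^ 2) (k * (t - y₁)) t := by
        have := (((hasDerivAt_id t).sub_const y₁).pow 2).const_mul (k / 2)
        exact this.congr_deriv (by simp [id_eq]; ring)
      exact (h1 t ht).add hc
    have hpmono1 : StrictMonoOn (fun t => f t + k / 2 * (t - y₁) ^ 2) (Icc x₁ y₁) := by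
      apply strictMonoOn_of_deriv_pos (convex_Icc _ _)
      · intro x hx; exact ((hpd x (hsub _ _ hx₁I hy₁I hx)).continuousAt).continuousWithinAt
      · intro x hx
        rw [interior_Icc] at hx
        have hxI := hsub _ _ hx₁I hy₁I (Ioo_subset_Icc_self hx)
        rw [(hpd x hxI).deriv]
        exact hp1pos_lt x hxI hx.2
    have hpmono2 : StrictMonoOn (fun t => f t + k / 2 * (t - y₁) ^ 2) (Icc y₁ z₁) := by
      apply strictMonoOn_of_deriv_pos (convex_Icc _ _)
      · intro x hx; exact ((hpd x (hsub _ _ hy₁I hz₁I hx)).continuousAt).continuousWithinAt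
      · intro x hx
        rw [interior_Icc] at hx
        have hxI := hsub _ _ hy₁I hz₁I (Ioo_subset_Icc_self hx)
        rw [(hpd x hxI).deriv]
        exact hp1pos_gt x hxI hx.1
    have pA : f x₁ + k / 2 * (x₁ - y₁) ^ 2 < f y₁ + k / 2 * (y₁ - y₁) ^ 2 :=
      hpmono1 (left_mem_Icc.2 h11.le) (right_mem_Icc.2 h11.le) h11
    have pB : f y₁ + k / 2 * (y₁ - y₁) ^ 2 < f z₁ + k / 2 * (z₁ - y₁) ^ 2 :=
      hpmono2 (left_mem_Icc.2 h13.le) (right_mem_Icc.2 h13.le) h13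
    have pC : 0 < f1 z₁ + k * (z₁ - y₁) := hp1pos_gt z₁ hz₁I h13
    -- u t = f t + (k*d) * t strictly increasing on [z₁, x₂]
    have hf1minz : ∀ t ∈ Icc z₁ x₂, f1 z₁ ≤ f1 t := by
      intro t ht
      rcases eq_or_lt_of_le ht.1 with h | h
      · rw [← h]
      · have hIcc : Icc z₁ t ⊆ I := hsub _ _ hz₁I (hsub _ _ hz₁I hx₂I ht)
        have : StrictMonoOn f1 (Icc z₁ t) := by
          apply strictMonoOn_of_deriv_pos (convex_Icc _ _) (hcontf1 _ hIcc)
          intro x hx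
          rw [interior_Icc] at hx
          rw [(h2 x (hIcc (Ioo_subset_Icc_self hx))).deriv]
          have := hmono hz₁I (hIcc (Ioo_subset_Icc_self hx)) hx.1
          rw [hfz₁] at this; linarith
        exact (this (left_mem_Icc.2 h.le) (right_mem_Icc.2 h.le) h).le
    have hud : ∀ t ∈ I, HasDerivAt (fun t => f t + (k * d) * t) (f1 t + k * d) t := by
      intro t ht
      exact ((h1 t ht).add ((hasDerivAt_id t).const_mul (k * d))).congr_deriv (by simp)
    have humono : StrictMonoOn (fun t => f t + (k * d) * t) (Icc z₁ x₂) := by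
      apply strictMonoOn_of_deriv_pos (convex_Icc _ _)
      · intro x hx; exact ((hud x (hsub _ _ hz₁I hx₂I hx)).continuousAt).continuousWithinAt
      · intro x hx
        rw [interior_Icc] at hx
        have hxI := hsub _ _ hz₁I hx₂I (Ioo_subset_Icc_self hx)
        rw [(hud x hxI).deriv]
        have := hf1minz x (Ioo_subset_Icc_self hx)
        simp only [hddef] at pC ⊢
        linarith
    have pD : f z₁ + (k * d) * z₁ < f x₂ + (k * d) * x₂ :=
      humono (left_mem_Icc.2 hcase.le) (right_mem_Icc.2 hcase.le) hcase
    rw [hfx₁] at pA; rw [hfx₂] at pD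
    have habs : |z₁ - x₂| = x₂ - z₁ := by rw [abs_of_nonpos (by linarith)]; ring
    rw [habs]
    apply Real.lt_sqrt_of_sq_lt
    simp only [hddef] at pD
    have key : k / 2 * ((y₁ - x₁) ^ 2) <
        k / 2 * ((z₁ - y₁) ^ 2 + 2 * (z₁ - y₁) * (x₂ - z₁)) := by
      have e1 : (x₁ - y₁) ^ 2 = (y₁ - x₁) ^ 2 := by ring
      rw [e1] at pA
      clear_value k d
      nlinarith [pA, pB, pD]
    exact (mul_lt_mul_iff_right₀ (by positivity : (0:ℝ) < k / 2)).mp key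

lemma core_right (f f1 f2 : ℝ → ℝ) (I : Set ℝ) (hIconn : I.OrdConnected)
    (h1 : ∀ x ∈ I, HasDerivAt f (f1 x) x)
    (h2 : ∀ x ∈ I, HasDerivAt f1 (f2 x) x)
    (hmono : StrictMonoOn f2 I)
    (x₂ y₂ x₃ z₁ : ℝ)
    (hx₂I : x₂ ∈ I) (hy₂I : y₂ ∈ I) (hx₃I : x₃ ∈ I) (hz₁I : z₁ ∈ I)
    (h11 : x₂ < y₂) (h12 : y₂ < x₃) (h13 : z₁ < y₂)
    (hfx₂ : f x₂ = 0) (hfx₃ : f x₃ = 0) (hfy₂ : f1 y₂ = 0) (hfz₁ : f2 z₁ = 0) :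
    x₃ - y₂ < y₂ - x₂ ∧
    x₃ - y₂ < Real.sqrt ((y₂ - z₁) ^ 2 + 2 * (y₂ - z₁) * |z₁ - x₂|) := by
  set I' : Set ℝ := (fun t : ℝ => -t) ⁻¹' I with hI'
  have hmem : ∀ a : ℝ, a ∈ I → -a ∈ I' := by
    intro a ha; simp only [hI', Set.mem_preimage, neg_neg]; exact ha
  have hmem' : ∀ a : ℝ, a ∈ I' → -a ∈ I := fun a ha => ha
  have hI'conn : I'.OrdConnected := by
    constructor
    intro a ha b hb t ht
    have h1t : -t ∈ Icc (-b) (-a) := ⟨neg_le_neg ht.2, neg_le_neg ht.1⟩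
    exact hIconn.out (hmem' b hb) (hmem' a ha) h1t
  have h1' : ∀ x ∈ I', HasDerivAt (fun t => -f (-t)) (f1 (-x)) x := by
    intro x hx
    have hneg : HasDerivAt (fun t : ℝ => -t) (-1) x := (hasDerivAt_id x).neg
    have h := ((h1 (-x) (hmem' x hx)).comp x hneg).neg
    exact h.congr_deriv (by ring)
  have h2' : ∀ x ∈ I', HasDerivAt (fun t => f1 (-t)) (-f2 (-x)) x := by
    intro x hx
    have hneg : HasDerivAt (fun t : ℝ => -t) (-1) x := (hasDerivAt_id x).neg
    have h := (h2 (-x) (hmem' x hx)).comp x hneg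
    exact h.congr_deriv (by ring)
  have hmono' : StrictMonoOn (fun t => -f2 (-t)) I' := by
    intro a ha b hb hab
    have := hmono (hmem' b hb) (hmem' a ha) (by linarith)
    simp only [neg_lt_neg_iff]
    exact this
  obtain ⟨hA, hB⟩ := core_lemma (fun t => -f (-t)) (fun t => f1 (-t)) (fun t => -f2 (-t))
    I' hI'conn h1' h2' hmono' (-x₃) (-y₂) (-x₂) (-z₁)
    (hmem _ hx₃I) (hmem _ hy₂I) (hmem _ hx₂I) (hmem _ hz₁I)
    (by linarith) (by linarith) (by linarith)
    (by simp [hfx₃]) (by simp [hfx₂]) (by simp [hfy₂]) (by simp [hfz₁])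
  constructor
  · linarith
  · have e : (-z₁ - -y₂) ^ 2 + 2 * (-z₁ - -y₂) * |-z₁ - -x₂| =
        (y₂ - z₁) ^ 2 + 2 * (y₂ - z₁) * |z₁ - x₂| := by
      rw [show -z₁ - -x₂ = -(z₁ - x₂) by ring, abs_neg]; ring
    rw [e] at hB; linarith

/-- `f` is `n`-nice on `I`: it is smooth on `I` and for each `i = 0, …, n`
the `i`-th derivative of `f` has exactly `n - i` zeros in `I`. -/
def IsNNice (n : ℕ) (f : ℝ → ℝ) (I : Set ℝ) : Prop :=
  ContDiffOn ℝ (⊤ : ℕ∞) f I ∧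
  ∀ i ≤ n, {x ∈ I | iteratedDeriv i f x = 0}.encard = ((n - i : ℕ) : ℕ∞)

/-- **Inequality Theorem (necessity).** For a `3`-nice function `f` on an open
interval `I`, with zeros `x₁ < x₂ < x₃` of `f`, zeros `y₁ < y₂` of `f'` and the
zero `z₁` of `f''`, the inequalities `(2)` hold. -/
theorem inequality_theorem_necessity
    (f : ℝ → ℝ) (I : Set ℝ) (hIopen : IsOpen I) (hIconn : I.OrdConnected)
    (hnice : IsNNice 3 f I)
    (x₁ x₂ x₃ y₁ y₂ z₁ : ℝ)
    (hx₁I : x₁ ∈ I) (hx₂I : x₂ ∈ I) (hx₃I : x₃ ∈ I)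
    (hy₁I : y₁ ∈ I) (hy₂I : y₂ ∈ I) (hz₁I : z₁ ∈ I)
    (hx12 : x₁ < x₂) (hx23 : x₂ < x₃) (hy12 : y₁ < y₂)
    (hfx₁ : f x₁ = 0) (hfx₂ : f x₂ = 0) (hfx₃ : f x₃ = 0)
    (hfy₁ : deriv f y₁ = 0) (hfy₂ : deriv f y₂ = 0)
    (hfz₁ : iteratedDeriv 2 f z₁ = 0) :
    x₁ < y₁ ∧ y₁ < x₂ ∧ x₂ < y₂ ∧ y₂ < x₃ ∧
    y₁ < z₁ ∧ z₁ < y₂ ∧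
    y₁ - x₁ < min (x₂ - y₁)
      (Real.sqrt ((z₁ - y₁) ^ 2 + 2 * (z₁ - y₁) * |z₁ - x₂|)) ∧
    x₃ - y₂ < min (y₂ - x₂)
      (Real.sqrt ((y₂ - z₁) ^ 2 + 2 * (y₂ - z₁) * |z₁ - x₂|)) := by
  obtain ⟨hsmooth, hcard⟩ := hnice
  -- zero set of deriv f is {y₁, y₂}
  have hZ1 : {x ∈ I | deriv f x = 0} = {y₁, y₂} := by
    have hc := hcard 1 (by norm_num)
    rw [iteratedDeriv_one] at hc
    have hfin : {x ∈ I | deriv f x = 0}.Finite := Set.finite_of_encard_eq_coe hc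
    refine (hfin.eq_of_subset_of_encard_le' ?_ ?_).symm
    · rintro x (rfl | rfl)
      · exact ⟨hy₁I, hfy₁⟩
      · exact ⟨hy₂I, hfy₂⟩
    · rw [hc, Set.encard_pair hy12.ne]
      norm_num
  -- zero set of iteratedDeriv 2 f is {z₁}
  have hZ2 : {x ∈ I | iteratedDeriv 2 f x = 0} = {z₁} := by
    have hc := hcard 2 (by norm_num)
    obtain ⟨a, ha⟩ := Set.encard_eq_one.mp (by rw [hc]; norm_num)
    have hz : z₁ ∈ ({a} : Set ℝ) := ha ▸ ⟨hz₁I, hfz₁⟩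
    rw [Set.mem_singleton_iff] at hz
    rw [ha, hz]
  -- iteratedDeriv 3 f has no zeros in I
  have hZ3 : ∀ x ∈ I, iteratedDeriv 3 f x ≠ 0 := by
    have hc := hcard 3 (by norm_num)
    norm_num at hc
    exact hc

  -- derivative infrastructure
  have heq2 : iteratedDeriv 2 f = deriv (deriv f) := by
    rw [iteratedDeriv_succ, iteratedDeriv_one]
  have heq3 : iteratedDeriv 3 f = deriv (iteratedDeriv 2 f) := iteratedDeriv_succ
  have hC1 : ContDiffOn ℝ (⊤ : ℕ∞) (deriv f) I := hsmooth.deriv_of_isOpen hIopen (by simp)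
  have hC2 : ContDiffOn ℝ (⊤ : ℕ∞) (iteratedDeriv 2 f) I := by
    rw [heq2]; exact hC1.deriv_of_isOpen hIopen (by simp)
  have hcont3 : ContinuousOn (iteratedDeriv 3 f) I := by
    rw [heq3]; exact (hC2.deriv_of_isOpen (m := (⊤ : ℕ∞)) hIopen (by simp)).continuousOn
  have hd1 : ∀ x ∈ I, HasDerivAt f (deriv f x) x := fun x hx =>
    ((hsmooth.differentiableOn (by simp)).differentiableAt (hIopen.mem_nhds hx)).hasDerivAt
  have hd2 : ∀ x ∈ I, HasDerivAt (deriv f) (iteratedDeriv 2 f x) x := by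
    intro x hx
    rw [heq2]
    exact ((hC1.differentiableOn (by simp)).differentiableAt (hIopen.mem_nhds hx)).hasDerivAt
  -- Rolle: locate y₁, y₂
  obtain ⟨c₁, hc₁mem, hc₁⟩ := exists_deriv_eq_zero hx12
    (hsmooth.continuousOn.mono (hIconn.out hx₁I hx₂I)) (by rw [hfx₁, hfx₂])
  obtain ⟨c₂, hc₂mem, hc₂⟩ := exists_deriv_eq_zero hx23
    (hsmooth.continuousOn.mono (hIconn.out hx₂I hx₃I)) (by rw [hfx₂, hfx₃])
  have hc₁I : c₁ ∈ I := hIconn.out hx₁I hx₂I (Ioo_subset_Icc_self hc₁mem)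
  have hc₂I : c₂ ∈ I := hIconn.out hx₂I hx₃I (Ioo_subset_Icc_self hc₂mem)
  have hc₁y : c₁ = y₁ ∨ c₁ = y₂ := by
    have : c₁ ∈ ({y₁, y₂} : Set ℝ) := hZ1 ▸ ⟨hc₁I, hc₁⟩
    simpa using this
  have hc₂y : c₂ = y₁ ∨ c₂ = y₂ := by
    have : c₂ ∈ ({y₁, y₂} : Set ℝ) := hZ1 ▸ ⟨hc₂I, hc₂⟩
    simpa using this
  have hkey : c₁ = y₁ ∧ c₂ = y₂ := by
    rcases hc₁y with h1 | h1 <;> rcases hc₂y with h2 | h2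
    · exact absurd (h1 ▸ h2 ▸ rfl : c₂ = c₁) (by intro h; linarith [hc₁mem.2, hc₂mem.1])
    · exact ⟨h1, h2⟩
    · subst h1; subst h2; linarith [hc₁mem.2, hc₂mem.1, hy12]
    · subst h1; subst h2; linarith [hc₁mem.2, hc₂mem.1]
  rw [hkey.1] at hc₁mem
  rw [hkey.2] at hc₂mem
  have hxy1 : x₁ < y₁ := hc₁mem.1
  have hxy2 : y₁ < x₂ := hc₁mem.2
  have hxy3 : x₂ < y₂ := hc₂mem.1
  have hxy4 : y₂ < x₃ := hc₂mem.2
  -- Rolle for deriv f : locate z₁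
  obtain ⟨c₃, hc₃mem, hc₃⟩ := exists_deriv_eq_zero hy12
    (hC1.continuousOn.mono (hIconn.out hy₁I hy₂I)) (by rw [hfy₁, hfy₂])
  have hc₃I : c₃ ∈ I := hIconn.out hy₁I hy₂I (Ioo_subset_Icc_self hc₃mem)
  have hc₃z : c₃ = z₁ := by
    have : c₃ ∈ ({z₁} : Set ℝ) := hZ2 ▸ ⟨hc₃I, by rw [heq2]; exact hc₃⟩
    simpa using this
  rw [hc₃z] at hc₃mem
  have hyz1 : y₁ < z₁ := hc₃mem.1
  have hyz2 : z₁ < y₂ := hc₃mem.2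
  -- sign dichotomy for iteratedDeriv 3 f
  have hsign : (∀ x ∈ I, 0 < iteratedDeriv 3 f x) ∨ (∀ x ∈ I, iteratedDeriv 3 f x < 0) := by
    by_contra hcon
    push_neg at hcon
    obtain ⟨⟨a, haI, ha⟩, ⟨b, hbI, hb⟩⟩ := hcon
    have hmem0 : (0:ℝ) ∈ uIcc (iteratedDeriv 3 f a) (iteratedDeriv 3 f b) := by
      rw [Set.mem_uIcc]; left; exact ⟨ha, hb⟩
    obtain ⟨c, hc, hc0⟩ := intermediate_value_uIcc
      (hcont3.mono (hIconn.uIcc_subset haI hbI)) hmem0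
    exact hZ3 c (hIconn.uIcc_subset haI hbI hc) hc0
  rcases hsign with hpos | hneg
  · -- iteratedDeriv 2 f strictly increasing
    have hmono2 : StrictMonoOn (iteratedDeriv 2 f) I := by
      apply strictMonoOn_of_deriv_pos hIconn.convex hC2.continuousOn
      intro x hx
      rw [hIopen.interior_eq] at hx
      rw [← heq3]
      exact hpos x hx
    obtain ⟨hL1, hL2⟩ := core_lemma f (deriv f) (iteratedDeriv 2 f) I hIconn hd1 hd2 hmono2
      x₁ y₁ x₂ z₁ hx₁I hy₁I hx₂I hz₁I hxy1 hxy2 hyz1 hfx₁ hfx₂ hfy₁ hfz₁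
    obtain ⟨hR1, hR2⟩ := core_right f (deriv f) (iteratedDeriv 2 f) I hIconn hd1 hd2 hmono2
      x₂ y₂ x₃ z₁ hx₂I hy₂I hx₃I hz₁I hxy3 hxy4 hyz2 hfx₂ hfx₃ hfy₂ hfz₁
    exact ⟨hxy1, hxy2, hxy3, hxy4, hyz1, hyz2, lt_min hL1 hL2, lt_min hR1 hR2⟩
  · -- iteratedDeriv 2 f strictly decreasing; use -f
    have hmono2 : StrictMonoOn (fun x => -iteratedDeriv 2 f x) I := by
      apply strictMonoOn_of_deriv_pos hIconn.convex hC2.continuousOn.neg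
      intro x hx
      rw [hIopen.interior_eq] at hx
      have hd : HasDerivAt (fun x => -iteratedDeriv 2 f x) (-iteratedDeriv 3 f x) x := by
        have := ((hC2.differentiableOn (by simp)).differentiableAt (hIopen.mem_nhds hx)).hasDerivAt
        rw [heq3]
        exact this.neg
      rw [show (-iteratedDeriv 2 f) = (fun x => -iteratedDeriv 2 f x) from rfl, hd.deriv]
      linarith [hneg x hx]
    have hd1' : ∀ x ∈ I, HasDerivAt (fun t => -f t) (-deriv f x) x := fun x hx => (hd1 x hx).neg
    have hd2' : ∀ x ∈ I, HasDerivAt (fun t => -deriv f t) (-iteratedDeriv 2 f x) x :=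
      fun x hx => (hd2 x hx).neg
    obtain ⟨hL1, hL2⟩ := core_lemma (fun t => -f t) (fun t => -deriv f t)
      (fun t => -iteratedDeriv 2 f t) I hIconn hd1' hd2' hmono2
      x₁ y₁ x₂ z₁ hx₁I hy₁I hx₂I hz₁I hxy1 hxy2 hyz1
      (by simp [hfx₁]) (by simp [hfx₂]) (by simp [hfy₁]) (by simp [hfz₁])
    obtain ⟨hR1, hR2⟩ := core_right (fun t => -f t) (fun t => -deriv f t)
      (fun t => -iteratedDeriv 2 f t) I hIconn hd1' hd2' hmono2
      x₂ y₂ x₃ z₁ hx₂I hy₂I hx₃I hz₁I hxy3 hxy4 hyz2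
      (by simp [hfx₂]) (by simp [hfx₃]) (by simp [hfy₂]) (by simp [hfz₁])
    exact ⟨hxy1, hxy2, hxy3, hxy4, hyz1, hyz2, lt_min hL1 hL2, lt_min hR1 hR2⟩
end

section
/- Let f : ℝ → ℝ be a 3-nice function on an open interval I with f''' > 0 on I, with the three zeros of f denoted x₁ < x₂ < x₃, the two zeros of f' denoted y₁ < y₂, and the unique zero of f'' denoted z₁. If x₂ < z₁, then y₁ − x₁ < x₂ − y₁ and x₃ − y₂ < √((y₂ − z₁)² + 2(y₂ − z₁)(z₁ − x₂)). -/
open Set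

lemma aux_hasDerivAt {f : ℝ → ℝ} {I : Set ℝ} (hI : IsOpen I) (hf : ContDiffOn ℝ (⊤ : ℕ∞) f I)
    (n : ℕ) {x : ℝ} (hx : x ∈ I) :
    HasDerivAt (iteratedDeriv n f) (iteratedDeriv (n + 1) f x) x := by
  have hu : UniqueDiffOn ℝ I := hI.uniqueDiffOn
  have hd : DifferentiableOn ℝ (iteratedDerivWithin n f I) I :=
    hf.differentiableOn_iteratedDerivWithin (by exact_mod_cast lt_top_iff_ne_top.2 (by simp)) hu
  have heq : ∀ y ∈ I, iteratedDerivWithin n f I y = iteratedDeriv n f y := by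
    intro y hy
    rw [iteratedDerivWithin, iteratedDeriv, iteratedFDerivWithin_of_isOpen n hI hy]
  have hev : iteratedDerivWithin n f I =ᶠ[nhds x] iteratedDeriv n f :=
    Filter.eventuallyEq_of_mem (hI.mem_nhds hx) heq
  have hdx : DifferentiableAt ℝ (iteratedDeriv n f) x :=
    (hev.differentiableAt_iff).1 ((hd x hx).differentiableAt (hI.mem_nhds hx))
  rw [iteratedDeriv_succ]
  exact hdx.hasDerivAt

set_option maxHeartbeats 2000000 in
/-- For a `3`-nice function `f` on an open interval `I` with `f''' > 0` on `I`,
with zeros `x₁ < x₂ < x₃` of `f`, `y₁ < y₂` of `f'`, `z₁` of `f''`: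
if `x₂ < z₁` then `y₁ - x₁ < x₂ - y₁` and
`x₃ - y₂ < √((y₂ - z₁)² + 2(y₂ - z₁)(z₁ - x₂))`. -/
theorem inequalities_case_x₂_lt_z₁
    (f : ℝ → ℝ) (I : Set ℝ) (hIopen : IsOpen I) (hIconn : I.OrdConnected)
    (hnice : IsNNice 3 f I)
    (hpos : ∀ x ∈ I, 0 < iteratedDeriv 3 f x)
    (x₁ x₂ x₃ y₁ y₂ z₁ : ℝ)
    (hx₁I : x₁ ∈ I) (hx₂I : x₂ ∈ I) (hx₃I : x₃ ∈ I)
    (hy₁I : y₁ ∈ I) (hy₂I : y₂ ∈ I) (hz₁I : z₁ ∈ I)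
    (hx12 : x₁ < x₂) (hx23 : x₂ < x₃) (hy12 : y₁ < y₂)
    (hfx₁ : f x₁ = 0) (hfx₂ : f x₂ = 0) (hfx₃ : f x₃ = 0)
    (hfy₁ : deriv f y₁ = 0) (hfy₂ : deriv f y₂ = 0)
    (hfz₁ : iteratedDeriv 2 f z₁ = 0)
    (hcase : x₂ < z₁) :
    y₁ - x₁ < x₂ - y₁ ∧
    x₃ - y₂ < Real.sqrt ((y₂ - z₁) ^ 2 + 2 * (y₂ - z₁) * (z₁ - x₂)) := by
  obtain ⟨hC, hcard⟩ := hnice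
  have hconv : Convex ℝ I := hIconn.convex
  have hsub : ∀ {u v : ℝ}, u ∈ I → v ∈ I → Icc u v ⊆ I := fun hu hv => hIconn.out hu hv
  have hd0 : ∀ x ∈ I, HasDerivAt f (deriv f x) x := by
    intro x hx
    simpa [iteratedDeriv_one, iteratedDeriv_zero] using aux_hasDerivAt hIopen hC 0 hx
  have hd1 : ∀ x ∈ I, HasDerivAt (deriv f) (iteratedDeriv 2 f x) x := by
    intro x hx
    simpa [iteratedDeriv_one] using aux_hasDerivAt hIopen hC 1 hx
  have hd2 : ∀ x ∈ I, HasDerivAt (iteratedDeriv 2 f) (iteratedDeriv 3 f x) x :=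
    fun x hx => aux_hasDerivAt hIopen hC 2 hx
  have hcf : ContinuousOn f I := fun x hx => ((hd0 x hx).continuousAt).continuousWithinAt
  -- second derivative strictly monotone
  have hg2mono : StrictMonoOn (iteratedDeriv 2 f) I := by
    apply strictMonoOn_of_deriv_pos hconv
    · exact fun x hx => ((hd2 x hx).continuousAt).continuousWithinAt
    · intro x hx
      rw [hIopen.interior_eq] at hx
      rw [(hd2 x hx).deriv]
      exact hpos x hx
  have hg2neg : ∀ x ∈ I, x < z₁ → iteratedDeriv 2 f x < 0 := by
    intro x hx h
    have := hg2mono hx hz₁I h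
    rwa [hfz₁] at this
  have hg2pos : ∀ x ∈ I, z₁ < x → 0 < iteratedDeriv 2 f x := by
    intro x hx h
    have := hg2mono hz₁I hx h
    rwa [hfz₁] at this
  have hanti : StrictAntiOn (deriv f) (I ∩ Iic z₁) := by
    apply strictAntiOn_of_deriv_neg (hconv.inter (convex_Iic z₁))
    · exact fun x hx => ((hd1 x hx.1).continuousAt).continuousWithinAt
    · intro x hx
      rw [interior_inter, hIopen.interior_eq, interior_Iic] at hx
      rw [(hd1 x hx.1).deriv]
      exact hg2neg x hx.1 hx.2
  have hmono : StrictMonoOn (deriv f) (I ∩ Ici z₁) := by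
    apply strictMonoOn_of_deriv_pos (hconv.inter (convex_Ici z₁))
    · exact fun x hx => ((hd1 x hx.1).continuousAt).continuousWithinAt
    · intro x hx
      rw [interior_inter, hIopen.interior_eq, interior_Ici] at hx
      rw [(hd1 x hx.1).deriv]
      exact hg2pos x hx.1 hx.2
  -- position of z₁ relative to y₁, y₂
  have hy₁z : y₁ < z₁ := by
    by_contra h
    push_neg at h
    have := hmono ⟨hy₁I, h⟩ ⟨hy₂I, le_trans h hy12.le⟩ hy12
    rw [hfy₁, hfy₂] at this
    exact lt_irrefl 0 this
  have hy₂z : z₁ < y₂ := by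
    by_contra h
    push_neg at h
    have := hanti ⟨hy₁I, hy12.le.trans h⟩ ⟨hy₂I, h⟩ hy12
    rw [hfy₁, hfy₂] at this
    exact lt_irrefl 0 this
  have hMpos : deriv f z₁ < 0 := by
    have := hanti ⟨hy₁I, hy₁z.le⟩ ⟨hz₁I, le_refl z₁⟩ hy₁z
    rwa [hfy₁] at this
  -- zero set of deriv f is {y₁, y₂}
  have hzs : {x | x ∈ I ∧ deriv f x = 0} = {y₁, y₂} := by
    have h2 := hcard 1 (by norm_num)
    simp only [iteratedDeriv_one] at h2
    norm_num at h2
    obtain ⟨a, b, hab, hset⟩ := Set.encard_eq_two.mp h2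
    have hy₁m : y₁ ∈ ({a, b} : Set ℝ) := hset ▸ (show y₁ ∈ {x | x ∈ I ∧ deriv f x = 0} from ⟨hy₁I, hfy₁⟩)
    have hy₂m : y₂ ∈ ({a, b} : Set ℝ) := hset ▸ (show y₂ ∈ {x | x ∈ I ∧ deriv f x = 0} from ⟨hy₂I, hfy₂⟩)
    rw [hset]
    simp only [Set.mem_insert_iff, Set.mem_singleton_iff] at hy₁m hy₂m
    rcases hy₁m with h1 | h1 <;> rcases hy₂m with h2 | h2
    · exact absurd (h1.trans h2.symm) hy12.ne
    · rw [← h1, ← h2]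
    · rw [← h1, ← h2, Set.pair_comm]
    · exact absurd (h1.trans h2.symm) hy12.ne
  -- Rolle between consecutive zeros of f
  obtain ⟨c₁, hc₁m, hc₁⟩ := exists_deriv_eq_zero hx12 (hcf.mono (hsub hx₁I hx₂I)) (hfx₁.trans hfx₂.symm)
  obtain ⟨c₂, hc₂m, hc₂⟩ := exists_deriv_eq_zero hx23 (hcf.mono (hsub hx₂I hx₃I)) (hfx₂.trans hfx₃.symm)
  have hc₁I : c₁ ∈ I := hsub hx₁I hx₂I (Ioo_subset_Icc_self hc₁m)
  have hc₂I : c₂ ∈ I := hsub hx₂I hx₃I (Ioo_subset_Icc_self hc₂m)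
  have hc₁mem : c₁ ∈ ({y₁, y₂} : Set ℝ) := hzs ▸ (show c₁ ∈ {x | x ∈ I ∧ deriv f x = 0} from ⟨hc₁I, hc₁⟩)
  have hc₂mem : c₂ ∈ ({y₁, y₂} : Set ℝ) := hzs ▸ (show c₂ ∈ {x | x ∈ I ∧ deriv f x = 0} from ⟨hc₂I, hc₂⟩)
  have horder : x₁ < y₁ ∧ y₁ < x₂ ∧ x₂ < y₂ ∧ y₂ < x₃ := by
    rcases hc₁mem with h1 | h1 <;> rcases hc₂mem with h2 | h2
    · exfalso; rw [h1] at hc₁m; rw [h2] at hc₂m; linarith [hc₁m.2, hc₂m.1]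
    · rw [h1] at hc₁m; rw [h2] at hc₂m
      exact ⟨hc₁m.1, hc₁m.2, hc₂m.1, hc₂m.2⟩
    · exfalso; rw [h1] at hc₁m; rw [h2] at hc₂m; linarith [hc₁m.2, hc₂m.1, hy12]
    · exfalso; rw [h1] at hc₁m; rw [h2] at hc₂m; linarith [hc₁m.2, hc₂m.1, hy12]
  obtain ⟨hx₁y₁, hy₁x₂, hx₂y₂, hy₂x₃⟩ := horder
  -- sign of f' left of y₁
  have hf'pos : ∀ x ∈ I, x < y₁ → 0 < deriv f x := by
    intro x hx h
    have := hanti ⟨hx, h.le.trans hy₁z.le⟩ ⟨hy₁I, hy₁z.le⟩ h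
    rwa [hfy₁] at this
  constructor
  · -- PART 1
    by_contra hk
    push_neg at hk
    have hu1 : x₁ ≤ 2 * y₁ - x₂ := by linarith
    have hu2 : 2 * y₁ - x₂ < y₁ := by linarith
    have hmemI : ∀ x ∈ Icc y₁ x₂, (2 * y₁ - x) ∈ I := by
      intro x hx
      exact hsub hx₁I hy₁I ⟨by linarith [hx.2], by linarith [hx.1]⟩
    have hPd : ∀ x ∈ Icc y₁ x₂, HasDerivAt (fun x => deriv f x + deriv f (2 * y₁ - x))
        (iteratedDeriv 2 f x - iteratedDeriv 2 f (2 * y₁ - x)) x := by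
      intro x hx
      have hxI : x ∈ I := hsub hy₁I hx₂I hx
      have hinner : HasDerivAt (fun y : ℝ => 2 * y₁ - y) (-1) x := by
        simpa using (hasDerivAt_id x).const_sub (2 * y₁)
      have hcomp := (hd1 _ (hmemI x hx)).comp x hinner
      have := (hd1 x hxI).add hcomp
      exact this.congr_deriv (by ring)
    have hPc : ContinuousOn (fun x => deriv f x + deriv f (2 * y₁ - x)) (Icc y₁ x₂) :=
      fun x hx => ((hPd x hx).continuousAt).continuousWithinAt
    have hPmono : StrictMonoOn (fun x => deriv f x + deriv f (2 * y₁ - x)) (Icc y₁ x₂) := by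
      apply strictMonoOn_of_deriv_pos (convex_Icc _ _) hPc
      intro x hx
      rw [interior_Icc] at hx
      rw [(hPd x (Ioo_subset_Icc_self hx)).deriv]
      have h1 : (2 * y₁ - x) < x := by linarith [hx.1]
      have := hg2mono (hmemI x (Ioo_subset_Icc_self hx)) (hsub hy₁I hx₂I (Ioo_subset_Icc_self hx)) h1
      linarith
    have hPy₁ : deriv f y₁ + deriv f (2 * y₁ - y₁) = 0 := by
      rw [show 2 * y₁ - y₁ = y₁ by ring, hfy₁]; ring
    have hPpos : ∀ x ∈ Ioc y₁ x₂, 0 < deriv f x + deriv f (2 * y₁ - x) := by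
      intro x hx
      have := hPmono ⟨le_refl y₁, hy₁x₂.le⟩ ⟨hx.1.le, hx.2⟩ hx.1
      simp only at this
      linarith [hPy₁]
    have hHd : ∀ x ∈ Icc y₁ x₂, HasDerivAt (fun x => f x - f (2 * y₁ - x))
        (deriv f x + deriv f (2 * y₁ - x)) x := by
      intro x hx
      have hxI : x ∈ I := hsub hy₁I hx₂I hx
      have hinner : HasDerivAt (fun y : ℝ => 2 * y₁ - y) (-1) x := by
        simpa using (hasDerivAt_id x).const_sub (2 * y₁)
      have hcomp := (hd0 _ (hmemI x hx)).comp x hinner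
      have := (hd0 x hxI).sub hcomp
      exact this.congr_deriv (by ring)
    have hHmono : StrictMonoOn (fun x => f x - f (2 * y₁ - x)) (Icc y₁ x₂) := by
      apply strictMonoOn_of_deriv_pos (convex_Icc _ _)
        (fun x hx => ((hHd x hx).continuousAt).continuousWithinAt)
      intro x hx
      rw [interior_Icc] at hx
      rw [(hHd x (Ioo_subset_Icc_self hx)).deriv]
      exact hPpos x ⟨hx.1, hx.2.le⟩
    have hH := hHmono ⟨le_refl y₁, hy₁x₂.le⟩ ⟨hy₁x₂.le, le_refl x₂⟩ hy₁x₂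
    simp only [show 2 * y₁ - y₁ = y₁ by ring, sub_self, hfx₂] at hH
    have hfu_neg : f (2 * y₁ - x₂) < 0 := by linarith [hH]
    -- but f is nonneg on [x₁, y₁)
    have hfmono : StrictMonoOn f (Icc x₁ y₁) := by
      apply strictMonoOn_of_deriv_pos (convex_Icc _ _) (hcf.mono (hsub hx₁I hy₁I))
      intro x hx
      rw [interior_Icc] at hx
      rw [(hd0 x (hsub hx₁I hy₁I (Ioo_subset_Icc_self hx))).deriv]
      exact hf'pos x (hsub hx₁I hy₁I (Ioo_subset_Icc_self hx)) hx.2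
    rcases eq_or_lt_of_le hu1 with h | h
    · rw [← h] at hfu_neg; linarith [hfx₁, hfu_neg]
    · have := hfmono ⟨le_refl x₁, by linarith⟩ ⟨hu1, hu2.le⟩ h
      rw [hfx₁] at this
      linarith
  · -- PART 2
    set M := -deriv f z₁ with hM_def
    have hM : 0 < M := by simp [hM_def]; linarith
    set K := iteratedDeriv 2 f y₂ with hK_def
    have hK : 0 < K := hg2pos y₂ hy₂I hy₂z
    set s := M / K with hs_def
    have hspos : 0 < s := div_pos hM hK
    have hMK : M = K * s := by rw [hs_def]; field_simp
    -- ψ x = deriv f x - K * (x - y₂)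
    have hψd : ∀ x ∈ I, HasDerivAt (fun x => deriv f x - K * (x - y₂))
        (iteratedDeriv 2 f x - K) x := by
      intro x hx
      have h2 : HasDerivAt (fun x : ℝ => K * (x - y₂)) K x := by
        simpa using ((hasDerivAt_id x).sub_const y₂).const_mul K
      exact (hd1 x hx).sub h2
    have hψanti : StrictAntiOn (fun x => deriv f x - K * (x - y₂)) (I ∩ Iic y₂) := by
      apply strictAntiOn_of_deriv_neg (hconv.inter (convex_Iic y₂))
        (fun x hx => ((hψd x hx.1).continuousAt).continuousWithinAt)
      intro x hx
      rw [interior_inter, hIopen.interior_eq, interior_Iic] at hx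
      rw [(hψd x hx.1).deriv]
      have := hg2mono hx.1 hy₂I hx.2
      linarith
    have hψmono : StrictMonoOn (fun x => deriv f x - K * (x - y₂)) (I ∩ Ici y₂) := by
      apply strictMonoOn_of_deriv_pos (hconv.inter (convex_Ici y₂))
        (fun x hx => ((hψd x hx.1).continuousAt).continuousWithinAt)
      intro x hx
      rw [interior_inter, hIopen.interior_eq, interior_Ici] at hx
      rw [(hψd x hx.1).deriv]
      have := hg2mono hy₂I hx.1 hx.2
      linarith
    have hψy₂ : deriv f y₂ - K * (y₂ - y₂) = 0 := by rw [hfy₂]; ring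
    have hψnonneg : ∀ x ∈ I, 0 ≤ deriv f x - K * (x - y₂) := by
      intro x hx
      rcases lt_trichotomy x y₂ with h | h | h
      · have := hψanti ⟨hx, h.le⟩ ⟨hy₂I, le_refl y₂⟩ h
        simp only at this; linarith
      · rw [h]; linarith [hψy₂]
      · have := hψmono ⟨hy₂I, le_refl y₂⟩ ⟨hx, h.le⟩ h
        simp only at this; linarith
    -- s < y₂ - z₁
    have hsa : s < y₂ - z₁ := by
      have := hψanti ⟨hz₁I, hy₂z.le⟩ ⟨hy₂I, le_refl y₂⟩ hy₂z
      simp only at this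
      rw [hψy₂] at this
      rw [hs_def, div_lt_iff₀ hK]
      nlinarith [this]
    have hw1 : z₁ < y₂ - s := by linarith
    have hw2 : y₂ - s < y₂ := by linarith
    have hwI : (y₂ - s) ∈ I := hsub hz₁I hy₂I ⟨hw1.le, hw2.le⟩
    -- F₂ = f x - K/2 (x - y₂)² is monotone on I
    have hF₂d : ∀ x ∈ I, HasDerivAt (fun x => f x - K / 2 * (x - y₂) ^ 2)
        (deriv f x - K * (x - y₂)) x := by
      intro x hx
      have h2 : HasDerivAt (fun x : ℝ => K / 2 * (x - y₂) ^ 2) (K * (x - y₂)) x := by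
        have := (((hasDerivAt_id x).sub_const y₂).pow 2).const_mul (K / 2)
        exact this.congr_deriv (by
          simp only [id_eq]
          push_cast
          ring)
      exact (hd0 x hx).sub h2
    have hF₂mono : MonotoneOn (fun x => f x - K / 2 * (x - y₂) ^ 2) (Icc (y₂ - s) x₃) := by
      have hIccI : Icc (y₂ - s) x₃ ⊆ I := hsub hwI hx₃I
      apply monotoneOn_of_deriv_nonneg (convex_Icc _ _)
        (fun x hx => ((hF₂d x (hIccI hx)).continuousAt).continuousWithinAt)
      · intro x hx
        rw [interior_Icc] at hx
        exact ((hF₂d x (hIccI (Ioo_subset_Icc_self hx))).differentiableAt).differentiableWithinAt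
      · intro x hx
        rw [interior_Icc] at hx
        rw [(hF₂d x (hIccI (Ioo_subset_Icc_self hx))).deriv]
        exact hψnonneg x (hIccI (Ioo_subset_Icc_self hx))
    have hF₂le := hF₂mono ⟨le_refl _, by linarith⟩ ⟨by linarith, le_refl x₃⟩ (by linarith)
    simp only [hfx₃] at hF₂le
    -- F₁ = f x + M x strictly monotone on [x₂, z₁] and on [z₁, y₂ - s]
    have hF₁d : ∀ x ∈ I, HasDerivAt (fun x => f x + M * x) (deriv f x + M) x := by
      intro x hx
      have h2 : HasDerivAt (fun x : ℝ => M * x) M x := by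
        simpa using (hasDerivAt_id x).const_mul M
      exact (hd0 x hx).add h2
    have hF₁m1 : StrictMonoOn (fun x => f x + M * x) (Icc x₂ z₁) := by
      apply strictMonoOn_of_deriv_pos (convex_Icc _ _)
        (fun x hx => ((hF₁d x (hsub hx₂I hz₁I hx)).continuousAt).continuousWithinAt)
      intro x hx
      rw [interior_Icc] at hx
      rw [(hF₁d x (hsub hx₂I hz₁I (Ioo_subset_Icc_self hx))).deriv]
      have := hanti ⟨hsub hx₂I hz₁I (Ioo_subset_Icc_self hx), hx.2.le⟩ ⟨hz₁I, le_refl z₁⟩ hx.2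
      simp only [hM_def]; linarith
    have hF₁m2 : StrictMonoOn (fun x => f x + M * x) (Icc z₁ (y₂ - s)) := by
      apply strictMonoOn_of_deriv_pos (convex_Icc _ _)
        (fun x hx => ((hF₁d x (hsub hz₁I hwI hx)).continuousAt).continuousWithinAt)
      intro x hx
      rw [interior_Icc] at hx
      rw [(hF₁d x (hsub hz₁I hwI (Ioo_subset_Icc_self hx))).deriv]
      have := hmono ⟨hz₁I, le_refl z₁⟩ ⟨hsub hz₁I hwI (Ioo_subset_Icc_self hx), hx.1.le⟩ hx.1
      simp only [hM_def]; linarith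
    have hA : f x₂ + M * x₂ < f z₁ + M * z₁ :=
      hF₁m1 ⟨le_refl x₂, hcase.le⟩ ⟨hcase.le, le_refl z₁⟩ hcase
    have hB : f z₁ + M * z₁ < f (y₂ - s) + M * (y₂ - s) :=
      hF₁m2 ⟨le_refl z₁, hw1.le⟩ ⟨hw1.le, le_refl _⟩ hw1
    rw [hfx₂] at hA
    -- combine
    have hkey : K * (x₃ - y₂) ^ 2 < K * (2 * s * (y₂ - x₂) - s ^ 2) := by
      have h2 : f (y₂ - s) - K / 2 * (y₂ - s - y₂) ^ 2 ≤ 0 - K / 2 * (x₃ - y₂) ^ 2 := hF₂le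
      nlinarith [hA, hB, hMK, h2]
    have h3 : (x₃ - y₂) ^ 2 < 2 * s * (y₂ - x₂) - s ^ 2 := by
      exact lt_of_mul_lt_mul_left (by linarith [hkey]) hK.le
    have hprod : 0 < (y₂ - z₁ - s) * ((y₂ - z₁) + 2 * (z₁ - x₂) - s) := by
      apply mul_pos <;> nlinarith [hsa, hcase]
    have hfinal : (x₃ - y₂) ^ 2 < (y₂ - z₁) ^ 2 + 2 * (y₂ - z₁) * (z₁ - x₂) := by
      nlinarith [h3, hprod]
    have hc0 : (0:ℝ) ≤ x₃ - y₂ := by linarith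
    rw [show x₃ - y₂ = x₃ - y₂ from rfl]
    exact (Real.lt_sqrt hc0).2 hfinal
end

section
/- Let f : ℝ → ℝ be a 3-nice function on an open interval I with f''' > 0 on I, with the three zeros of f denoted x₁ < x₂ < x₃, the two zeros of f' denoted y₁ < y₂, and the unique zero of f'' denoted z₁. If z₁ < x₂, then x₃ − y₂ < y₂ − x₂ and y₁ − x₁ < √((z₁ − y₁)² + 2(z₁ − y₁)(x₂ − z₁)). -/
open Set

lemma helper_strictMonoOn_Icc {g g' : ℝ → ℝ} {p q : ℝ}
    (hd : ∀ x ∈ Icc p q, HasDerivAt g (g' x) x)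
    (hpos : ∀ x ∈ Ioo p q, 0 < g' x) : StrictMonoOn g (Icc p q) := by
  apply strictMonoOn_of_deriv_pos (convex_Icc p q)
    (fun x hx => (hd x hx).continuousAt.continuousWithinAt)
  intro x hx
  rw [interior_Icc] at hx
  rw [(hd x (Ioo_subset_Icc_self hx)).deriv]
  exact hpos x hx

lemma helper_strictAntiOn_Icc {g g' : ℝ → ℝ} {p q : ℝ}
    (hd : ∀ x ∈ Icc p q, HasDerivAt g (g' x) x)
    (hneg : ∀ x ∈ Ioo p q, g' x < 0) : StrictAntiOn g (Icc p q) := by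
  apply strictAntiOn_of_deriv_neg (convex_Icc p q)
    (fun x hx => (hd x hx).continuousAt.continuousWithinAt)
  intro x hx
  rw [interior_Icc] at hx
  rw [(hd x (Ioo_subset_Icc_self hx)).deriv]
  exact hneg x hx

set_option maxHeartbeats 1600000

/-- For a `3`-nice function `f` on an open interval `I` with `f''' > 0` on `I`,
with zeros `x₁ < x₂ < x₃` of `f`, `y₁ < y₂` of `f'`, `z₁` of `f''`:
if `z₁ < x₂` then `x₃ - y₂ < y₂ - x₂` and
`y₁ - x₁ < √((z₁ - y₁)² + 2(z₁ - y₁)(x₂ - z₁))`. -/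
theorem inequalities_case_z₁_lt_x₂
    (f : ℝ → ℝ) (I : Set ℝ) (hIopen : IsOpen I) (hIconn : I.OrdConnected)
    (hnice : IsNNice 3 f I)
    (hpos : ∀ x ∈ I, 0 < iteratedDeriv 3 f x)
    (x₁ x₂ x₃ y₁ y₂ z₁ : ℝ)
    (hx₁I : x₁ ∈ I) (hx₂I : x₂ ∈ I) (hx₃I : x₃ ∈ I)
    (hy₁I : y₁ ∈ I) (hy₂I : y₂ ∈ I) (hz₁I : z₁ ∈ I)
    (hx12 : x₁ < x₂) (hx23 : x₂ < x₃) (hy12 : y₁ < y₂)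
    (hfx₁ : f x₁ = 0) (hfx₂ : f x₂ = 0) (hfx₃ : f x₃ = 0)
    (hfy₁ : deriv f y₁ = 0) (hfy₂ : deriv f y₂ = 0)
    (hfz₁ : iteratedDeriv 2 f z₁ = 0)
    (hcase : z₁ < x₂) :
    x₃ - y₂ < y₂ - x₂ ∧
    y₁ - x₁ < Real.sqrt ((z₁ - y₁) ^ 2 + 2 * (z₁ - y₁) * (x₂ - z₁)) := by
  have hcd : ContDiffOn ℝ (⊤ : ℕ∞) f I := hnice.1
  set f1 := deriv f with hf1def
  set f2 := deriv f1 with hf2def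
  have hid2 : iteratedDeriv 2 f = f2 := by
    funext x
    rw [iteratedDeriv_succ, iteratedDeriv_one]
  have hid3 : iteratedDeriv 3 f = deriv f2 := by
    rw [iteratedDeriv_succ, hid2]
  have hcd1 : ContDiffOn ℝ (⊤ : ℕ∞) f1 I := hcd.deriv_of_isOpen hIopen (by simp)
  have hcd2 : ContDiffOn ℝ (⊤ : ℕ∞) f2 I := hcd1.deriv_of_isOpen hIopen (by simp)
  -- derivatives as HasDerivAt
  have hdf : ∀ x ∈ I, HasDerivAt f (f1 x) x := fun x hx =>
    (((hcd.differentiableOn (by simp)).differentiableAt (hIopen.mem_nhds hx)).hasDerivAt)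
  have hdf1 : ∀ x ∈ I, HasDerivAt f1 (f2 x) x := fun x hx =>
    (((hcd1.differentiableOn (by simp)).differentiableAt (hIopen.mem_nhds hx)).hasDerivAt)
  -- I is convex, ord-connected subsets
  have hIconv : Convex ℝ I := convex_iff_ordConnected.mpr hIconn
  have hsub : ∀ {p q : ℝ}, p ∈ I → q ∈ I → Icc p q ⊆ I := fun hp hq => hIconn.out hp hq
  -- f2 strictly monotone on I
  have hmono2 : StrictMonoOn f2 I := by
    apply strictMonoOn_of_deriv_pos hIconv hcd2.continuousOn
    intro x hx
    rw [hIopen.interior_eq] at hx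
    have := hpos x hx
    rwa [hid3] at this
  have hf2z : f2 z₁ = 0 := by rw [← hid2]; exact hfz₁
  have hf2neg : ∀ x ∈ I, x < z₁ → f2 x < 0 := by
    intro x hx h
    have := hmono2 hx hz₁I h
    rwa [hf2z] at this
  have hf2pos : ∀ x ∈ I, z₁ < x → 0 < f2 x := by
    intro x hx h
    have := hmono2 hz₁I hx h
    rwa [hf2z] at this
  -- zero sets
  have hS0 : {x ∈ I | f x = 0}.encard = 3 := by
    have := hnice.2 0 (by norm_num)
    simpa [iteratedDeriv_zero] using this
  have hS1 : {x ∈ I | f1 x = 0}.encard = 2 := by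
    have := hnice.2 1 (by norm_num)
    simpa [iteratedDeriv_one] using this
  have hS2 : {x ∈ I | f2 x = 0}.encard = 1 := by
    have := hnice.2 2 (by norm_num)
    rw [hid2] at this
    simpa using this
  have hS2eq : {x ∈ I | f2 x = 0} = {z₁} := by
    obtain ⟨a, ha⟩ := Set.encard_eq_one.mp hS2
    have hz : z₁ ∈ {x ∈ I | f2 x = 0} := ⟨hz₁I, hf2z⟩
    rw [ha] at hz ⊢
    rw [Set.mem_singleton_iff] at hz
    rw [hz]
  have hS1eq : {x ∈ I | f1 x = 0} = {y₁, y₂} := by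
    refine ((Set.Finite.eq_of_subset_of_encard_le ?_ ?_ ?_)).symm
    · exact (Set.finite_singleton y₁).insert y₂ |>.subset (by simp [Set.pair_comm])
    · rintro t (rfl | rfl)
      · exact ⟨hy₁I, hfy₁⟩
      · exact ⟨hy₂I, hfy₂⟩
    · rw [hS1, Set.encard_pair hy12.ne]
  have hS0eq : {x ∈ I | f x = 0} = {x₁, x₂, x₃} := by
    refine ((Set.Finite.eq_of_subset_of_encard_le ?_ ?_ ?_)).symm
    · exact (Set.finite_singleton x₃).insert x₂ |>.insert x₁
    · rintro t (rfl | rfl | rfl)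
      · exact ⟨hx₁I, hfx₁⟩
      · exact ⟨hx₂I, hfx₂⟩
      · exact ⟨hx₃I, hfx₃⟩
    · rw [hS0]
      have hne : x₁ ∉ ({x₂, x₃} : Set ℝ) := by
        simp only [Set.mem_insert_iff, Set.mem_singleton_iff]
        push_neg
        exact ⟨hx12.ne, (hx12.trans hx23).ne⟩
      rw [Set.encard_insert_of_notMem hne, Set.encard_pair hx23.ne]
      norm_num
  have honly0 : ∀ x ∈ I, f x = 0 → x = x₁ ∨ x = x₂ ∨ x = x₃ := by
    intro x hx h
    have : x ∈ {x ∈ I | f x = 0} := ⟨hx, h⟩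
    rw [hS0eq] at this
    simpa using this
  have honly1 : ∀ x ∈ I, f1 x = 0 → x = y₁ ∨ x = y₂ := by
    intro x hx h
    have : x ∈ {x ∈ I | f1 x = 0} := ⟨hx, h⟩
    rw [hS1eq] at this
    simpa using this
  -- Rolle between x₁ x₂ and x₂ x₃
  have hcontf : ContinuousOn f I := hcd.continuousOn
  obtain ⟨c, hcmem, hc0⟩ := exists_deriv_eq_zero hx12
    (hcontf.mono (hsub hx₁I hx₂I)) (hfx₁.trans hfx₂.symm)
  obtain ⟨d, hdmem, hd0⟩ := exists_deriv_eq_zero hx23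
    (hcontf.mono (hsub hx₂I hx₃I)) (hfx₂.trans hfx₃.symm)
  have hcI : c ∈ I := hsub hx₁I hx₂I (Ioo_subset_Icc_self hcmem)
  have hdI : d ∈ I := hsub hx₂I hx₃I (Ioo_subset_Icc_self hdmem)
  have hcy : c = y₁ ∨ c = y₂ := honly1 c hcI hc0
  have hdy : d = y₁ ∨ d = y₂ := honly1 d hdI hd0
  have hcd' : c < d := hcmem.2.trans hdmem.1
  have hcy1 : c = y₁ := by
    rcases hcy with h | h
    · exact h
    · exfalso
      rcases hdy with h' | h'
      · exact absurd (hcd'.trans_eq h') (by rw [h]; exact not_lt.mpr hy12.le)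
      · exact absurd (h ▸ h' ▸ hcd') (lt_irrefl _)
  have hdy2 : d = y₂ := by
    rcases hdy with h | h
    · exfalso
      rw [hcy1, h] at hcd'
      exact absurd hcd' (lt_irrefl _)
    · exact h
  subst hcy1; subst hdy2
  have hx1y1 : x₁ < c := hcmem.1
  have hy1x2 : c < x₂ := hcmem.2
  have hx2y2 : x₂ < d := hdmem.1
  have hy2x3 : d < x₃ := hdmem.2
  -- Rolle for f1 gives z₁ between y₁ and y₂
  obtain ⟨e, hemem, he0⟩ := exists_deriv_eq_zero hy12
    (hcd1.continuousOn.mono (hsub hy₁I hy₂I)) (hfy₁.trans hfy₂.symm)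
  have heI : e ∈ I := hsub hy₁I hy₂I (Ioo_subset_Icc_self hemem)
  have hez : e = z₁ := by
    have : e ∈ {x ∈ I | f2 x = 0} := ⟨heI, he0⟩
    rw [hS2eq] at this
    simpa using this
  have hy1z1 : c < z₁ := hez ▸ hemem.1
  have hz1y2 : z₁ < d := hez ▸ hemem.2
  -- f1 is negative on (y₁, y₂)
  have hf1z1 : f1 z₁ < 0 := by
    have hanti : StrictAntiOn f1 (Icc c z₁) := by
      apply helper_strictAntiOn_Icc (g' := f2)
      · exact fun x hx => hdf1 x (hsub hy₁I hz₁I hx)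
      · exact fun x hx => hf2neg x (hsub hy₁I hz₁I (Ioo_subset_Icc_self hx)) hx.2
    have := hanti (left_mem_Icc.mpr hy1z1.le) (right_mem_Icc.mpr hy1z1.le) hy1z1
    rwa [hfy₁] at this
  have hf1neg : ∀ t ∈ Ioo c d, f1 t < 0 := by
    intro t ht
    by_contra h
    push_neg at h
    have htI : t ∈ I := hsub hy₁I hy₂I (Ioo_subset_Icc_self ht)
    have hne : f1 t ≠ 0 := by
      intro h0
      rcases honly1 t htI h0 with rfl | rfl
      · exact absurd ht.1 (lt_irrefl _)
      · exact absurd ht.2 (lt_irrefl _)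
    have hpos' : 0 < f1 t := lt_of_le_of_ne h (Ne.symm hne)
    -- IVT between t and z₁
    rcases lt_trichotomy t z₁ with hlt | heq | hgt
    · have : (0 : ℝ) ∈ Ioo (f1 z₁) (f1 t) := ⟨hf1z1, hpos'⟩
      have hivt := intermediate_value_Ioo' hlt.le
        (hcd1.continuousOn.mono (hsub htI hz₁I)) this
      obtain ⟨u, hu, hu0⟩ := hivt
      have huI : u ∈ I := hsub htI hz₁I (Ioo_subset_Icc_self hu)
      rcases honly1 u huI hu0 with rfl | rfl
      · exact absurd (ht.1.trans hu.1) (lt_irrefl _)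
      · exact absurd (hu.2.trans hz1y2) (lt_irrefl _)
    · rw [heq] at hpos'; exact absurd hpos' (not_lt.mpr hf1z1.le)
    · have : (0 : ℝ) ∈ Ioo (f1 z₁) (f1 t) := ⟨hf1z1, hpos'⟩
      have hivt := intermediate_value_Ioo hgt.le
        (hcd1.continuousOn.mono (hsub hz₁I htI)) this
      obtain ⟨u, hu, hu0⟩ := hivt
      have huI : u ∈ I := hsub hz₁I htI (Ioo_subset_Icc_self hu)
      rcases honly1 u huI hu0 with rfl | rfl
      · exact absurd (hy1z1.trans hu.1) (lt_irrefl _)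
      · exact absurd (hu.2.trans ht.2) (lt_irrefl _)
  -- f(y₂) < 0
  have hfanti : StrictAntiOn f (Icc c d) := by
    apply helper_strictAntiOn_Icc (g' := f1)
    · exact fun x hx => hdf x (hsub hy₁I hy₂I hx)
    · exact hf1neg
  have hfy2neg : f d < 0 := by
    have := hfanti (mem_Icc.mpr ⟨hy1x2.le, hx2y2.le⟩)
      (right_mem_Icc.mpr hy12.le) hx2y2
    rwa [hfx₂] at this
  -- f < 0 on (x₂, x₃)
  have hfneg : ∀ v ∈ Ioo x₂ x₃, f v < 0 := by
    intro v hv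
    by_contra h
    push_neg at h
    have hvI : v ∈ I := hsub hx₂I hx₃I (Ioo_subset_Icc_self hv)
    have hne : f v ≠ 0 := by
      intro h0
      rcases honly0 v hvI h0 with rfl | rfl | rfl
      · exact absurd (hx12.trans hv.1) (lt_irrefl _)
      · exact absurd hv.1 (lt_irrefl _)
      · exact absurd hv.2 (lt_irrefl _)
    have hposv : 0 < f v := lt_of_le_of_ne h (Ne.symm hne)
    rcases lt_trichotomy v d with hlt | heq | hgt
    · have : (0 : ℝ) ∈ Ioo (f d) (f v) := ⟨hfy2neg, hposv⟩
      obtain ⟨u, hu, hu0⟩ := intermediate_value_Ioo' hlt.le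
        (hcontf.mono (hsub hvI hy₂I)) this
      have huI : u ∈ I := hsub hvI hy₂I (Ioo_subset_Icc_self hu)
      rcases honly0 u huI hu0 with rfl | rfl | rfl
      · exact absurd (hx12.trans (hv.1.trans hu.1)) (lt_irrefl _)
      · exact absurd (hv.1.trans hu.1) (lt_irrefl _)
      · exact absurd (hu.2.trans hy2x3) (lt_irrefl _)
    · rw [heq] at hposv; exact absurd hposv (not_lt.mpr hfy2neg.le)
    · have : (0 : ℝ) ∈ Ioo (f d) (f v) := ⟨hfy2neg, hposv⟩
      obtain ⟨u, hu, hu0⟩ := intermediate_value_Ioo hgt.le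
        (hcontf.mono (hsub hy₂I hvI)) this
      have huI : u ∈ I := hsub hy₂I hvI (Ioo_subset_Icc_self hu)
      rcases honly0 u huI hu0 with rfl | rfl | rfl
      · exact absurd (hx12.trans (hx2y2.trans hu.1)) (lt_irrefl _)
      · exact absurd (hx2y2.trans hu.1) (lt_irrefl _)
      · exact absurd (hu.2.trans hv.2) (lt_irrefl _)
  constructor
  · -- Part (a)
    by_contra hcon
    push_neg at hcon
    set w := 2 * d - x₂ with hwdef
    have hwx3 : w ≤ x₃ := by linarith
    have hy2w : d < w := by linarith
    have hwI : w ∈ I := hsub hy₂I hx₃I (mem_Icc.mpr ⟨hy2w.le, hwx3⟩)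
    have hmemI : ∀ x ∈ Icc d w, x ∈ I := fun x hx =>
      hsub hy₂I hwI hx
    have hmemI' : ∀ x ∈ Icc d w, 2 * d - x ∈ I := by
      intro x hx
      simp only [mem_Icc] at hx
      apply hsub hx₂I hy₂I
      rw [mem_Icc]
      constructor <;> linarith [hx.1, hx.2]
    -- φ = f1 x + f1 (2d - x)
    have hdphi : ∀ x ∈ Icc d w,
        HasDerivAt (fun x => f1 x + f1 (2 * d - x)) (f2 x - f2 (2 * d - x)) x := by
      intro x hx
      have h1 := hdf1 x (hmemI x hx)
      have hinner : HasDerivAt (fun x : ℝ => 2 * d - x) (-1) x := by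
        simpa using (hasDerivAt_id x).const_sub (2 * d)
      have h2 := (hdf1 (2 * d - x) (hmemI' x hx)).comp x hinner
      have := h1.add h2
      exact this.congr_deriv (by ring)
    have hphimono : StrictMonoOn (fun x => f1 x + f1 (2 * d - x)) (Icc d w) := by
      apply helper_strictMonoOn_Icc hdphi
      intro x hx
      have h1 : 2 * d - x < x := by linarith [hx.1]
      have := hmono2 (hmemI' x (Ioo_subset_Icc_self hx)) (hmemI x (Ioo_subset_Icc_self hx)) h1
      linarith
    have hphipos : ∀ x ∈ Ioo d w, 0 < f1 x + f1 (2 * d - x) := by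
      intro x hx
      have := hphimono (left_mem_Icc.mpr hy2w.le)
        (Ioo_subset_Icc_self hx) hx.1
      simp only at this
      have h0 : f1 d + f1 (2 * d - d) = 0 := by
        rw [show 2 * d - d = d by ring, hfy₂]; ring
      linarith
    -- g = f x - f (2d - x)
    have hdg : ∀ x ∈ Icc d w,
        HasDerivAt (fun x => f x - f (2 * d - x)) (f1 x + f1 (2 * d - x)) x := by
      intro x hx
      have h1 := hdf x (hmemI x hx)
      have hinner : HasDerivAt (fun x : ℝ => 2 * d - x) (-1) x := by
        simpa using (hasDerivAt_id x).const_sub (2 * d)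
      have h2 := (hdf (2 * d - x) (hmemI' x hx)).comp x hinner
      have := h1.sub h2
      exact this.congr_deriv (by ring)
    have hgmono : StrictMonoOn (fun x => f x - f (2 * d - x)) (Icc d w) :=
      helper_strictMonoOn_Icc hdg hphipos
    have hgw : 0 < f w - f (2 * d - w) := by
      have := hgmono (left_mem_Icc.mpr hy2w.le) (right_mem_Icc.mpr hy2w.le) hy2w
      simp only at this
      have h0 : f d - f (2 * d - d) = 0 := by rw [show 2 * d - d = d by ring]; ring
      linarith
    have h2dw : 2 * d - w = x₂ := by rw [hwdef]; ring
    rw [h2dw, hfx₂, sub_zero] at hgw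
    rcases lt_or_eq_of_le hwx3 with hlt | heq
    · exact absurd hgw (not_lt.mpr (hfneg w ⟨by linarith, hlt⟩).le)
    · rw [heq, hfx₃] at hgw
      exact absurd hgw (lt_irrefl _)
  · -- Part (b)
    have hK : f2 c < 0 := hf2neg c hy₁I hy1z1
    -- U = f1 x - f2 c * (x - c)
    have hdU : ∀ x ∈ I, HasDerivAt (fun x => f1 x - f2 c * (x - c)) (f2 x - f2 c) x := by
      intro x hx
      have h1 := hdf1 x hx
      have h2 : HasDerivAt (fun x : ℝ => f2 c * (x - c)) (f2 c) x := by
        simpa using ((hasDerivAt_id x).sub_const c).const_mul (f2 c)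
      exact h1.sub h2
    have hUmono : StrictMonoOn (fun x => f1 x - f2 c * (x - c)) (Icc c x₂) := by
      apply helper_strictMonoOn_Icc (fun x hx => hdU x (hsub hy₁I hx₂I hx))
      intro x hx
      have := hmono2 hy₁I (hsub hy₁I hx₂I (Ioo_subset_Icc_self hx)) hx.1
      linarith
    have hUanti : StrictAntiOn (fun x => f1 x - f2 c * (x - c)) (Icc x₁ c) := by
      apply helper_strictAntiOn_Icc (fun x hx => hdU x (hsub hx₁I hy₁I hx))
      intro x hx
      have := hmono2 (hsub hx₁I hy₁I (Ioo_subset_Icc_self hx)) hy₁I hx.2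
      linarith
    have hU0 : f1 c - f2 c * (c - c) = 0 := by rw [hfy₁]; ring
    -- u = f x - (f2 c / 2) * (x - c)^2
    have hdu : ∀ x ∈ I, HasDerivAt (fun x => f x - f2 c / 2 * (x - c) ^ 2)
        (f1 x - f2 c * (x - c)) x := by
      intro x hx
      have h1 := hdf x hx
      have h2 : HasDerivAt (fun x : ℝ => f2 c / 2 * (x - c) ^ 2) (f2 c * (x - c)) x := by
        have := (((hasDerivAt_id x).sub_const c).pow 2).const_mul (f2 c / 2)
        exact this.congr_deriv (by simp; ring)
      exact h1.sub h2
    -- on [x₁, c]: u strictly mono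
    have humono1 : StrictMonoOn (fun x => f x - f2 c / 2 * (x - c) ^ 2) (Icc x₁ c) := by
      apply helper_strictMonoOn_Icc (fun x hx => hdu x (hsub hx₁I hy₁I hx))
      intro x hx
      have := hUanti (Ioo_subset_Icc_self hx) (right_mem_Icc.mpr hx1y1.le) hx.2
      simp only at this
      linarith [hU0]
    have h1 : -(f2 c / 2) * (c - x₁) ^ 2 < f c := by
      have := humono1 (left_mem_Icc.mpr hx1y1.le) (right_mem_Icc.mpr hx1y1.le) hx1y1
      simp only at this
      rw [hfx₁] at this
      nlinarith [this]
    -- on [c, z₁]: u strictly mono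
    have humono2 : StrictMonoOn (fun x => f x - f2 c / 2 * (x - c) ^ 2) (Icc c z₁) := by
      apply helper_strictMonoOn_Icc (fun x hx => hdu x (hsub hy₁I hz₁I hx))
      intro x hx
      have hxmem : x ∈ Icc c x₂ := mem_Icc.mpr ⟨hx.1.le, (hx.2.trans hcase).le⟩
      have := hUmono (left_mem_Icc.mpr hy1x2.le) hxmem hx.1
      simp only at this
      linarith [hU0]
    have h2 : f c < f z₁ - f2 c / 2 * (z₁ - c) ^ 2 := by
      have := humono2 (left_mem_Icc.mpr hy1z1.le) (right_mem_Icc.mpr hy1z1.le) hy1z1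
      simp only at this
      linarith [this]
    -- f1 z₁ > f2 c * (z₁ - c)
    have hf1z1K : f2 c * (z₁ - c) < f1 z₁ := by
      have hzmem : z₁ ∈ Icc c x₂ := mem_Icc.mpr ⟨hy1z1.le, hcase.le⟩
      have := hUmono (left_mem_Icc.mpr hy1x2.le) hzmem hy1z1
      simp only at this
      linarith [hU0]
    -- f1 strictly increasing on [z₁, x₂]
    have hf1mono : StrictMonoOn f1 (Icc z₁ x₂) := by
      apply helper_strictMonoOn_Icc (g' := f2)
        (fun x hx => hdf1 x (hsub hz₁I hx₂I hx))
      exact fun x hx => hf2pos x (hsub hz₁I hx₂I (Ioo_subset_Icc_self hx)) hx.1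
    -- W = f t - f2 c * (z₁ - c) * t strictly mono on [z₁, x₂]
    have hWmono : StrictMonoOn (fun t => f t - f2 c * (z₁ - c) * t) (Icc z₁ x₂) := by
      apply helper_strictMonoOn_Icc (g' := fun t => f1 t - f2 c * (z₁ - c))
      · intro x hx
        exact (hdf x (hsub hz₁I hx₂I hx)).sub
          (by simpa using (hasDerivAt_id x).const_mul (f2 c * (z₁ - c)))
      · intro x hx
        rcases eq_or_lt_of_le hx.1.le with rfl | hlt
        · linarith [hf1z1K]
        · have := hf1mono (left_mem_Icc.mpr hcase.le) (Ioo_subset_Icc_self hx) hx.1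
          linarith [hf1z1K]
    have h3 : f z₁ < -(f2 c) * (z₁ - c) * (x₂ - z₁) := by
      have := hWmono (left_mem_Icc.mpr hcase.le) (right_mem_Icc.mpr hcase.le) hcase
      simp only at this
      rw [hfx₂] at this
      nlinarith [this]
    -- combine
    have hKpos : (0 : ℝ) < -(f2 c) / 2 := by linarith
    have hsum : -(f2 c) / 2 * ((c - x₁) ^ 2) <
        -(f2 c) / 2 * ((z₁ - c) ^ 2 + 2 * (z₁ - c) * (x₂ - z₁)) := by
      nlinarith [h1, h2, h3]
    have hfin : (c - x₁) ^ 2 < (z₁ - c) ^ 2 + 2 * (z₁ - c) * (x₂ - z₁) :=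
      (mul_lt_mul_iff_right₀ hKpos).mp hsum
    rw [Real.lt_sqrt (by linarith [hx1y1] : (0:ℝ) ≤ c - x₁)]
    exact hfin
end

section
/- Let p : ℝ → ℝ be a real polynomial of degree 4 with four distinct real zeros x₁ < x₂ < x₃ < x₄. Denote by y₁ < y₂ < y₃ the zeros of p', by z₁ < z₂ the zeros of p'', and by t₁ the zero of p'''. If x₂ < z₁ and x₃ < z₂, then y₂ < t₁. Equivalently, the symbolic sequences 0102310210 and 0120132010 are non-realizable by degree-4 polynomials with all real distinct roots. -/
/-!
Rolle's theorem, together with the bound on the number of roots, forces the interlacing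
`x₁ < y₁ < x₂ < y₂ < x₃ < y₃ < x₄` and `y₁ < z₁ < y₂ < z₂ < y₃`. As `p''` is quadratic, `t₁` is the
midpoint of `z₁` and `z₂`, and as `p'''(t₁) = 0` the odd part of `p` about `t₁` is linear:
`p(t₁ + h) - p(t₁ - h) = 2h p'(t₁)`. With `c` the leading coefficient, `x₂ < z₁ < x₃ < z₂ < x₄`
gives `c p(z₁) > 0 > c p(z₂)`, hence `c p'(t₁) < 0`. But if `t₁ ≤ y₂`, then `y₁ < z₁ < t₁ ≤ y₂`
and `c p'(t₁) = 4c²(t₁ - y₁)(t₁ - y₂)(t₁ - y₃) ≥ 0`.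
-/

open Polynomial

namespace Polynomial

section Roots

variable {R : Type*} [CommRing R] [IsDomain R]

theorem mem_of_isRoot_of_natDegree_le_card {q : R[X]} {s : Finset R} (hq : q ≠ 0)
    (hs : ∀ x ∈ s, q.IsRoot x) (hcard : q.natDegree ≤ s.card) {x : R} (hx : q.IsRoot x) :
    x ∈ s := by
  rw [← Finset.mem_val, ← roots_eq_of_natDegree_le_card_of_ne_zero hs hcard hq]
  exact (mem_roots hq).2 hx

theorem eval_eq_leadingCoeff_mul_prod_of_natDegree_le_card {q : R[X]} {s : Finset R}
    (hq : q ≠ 0) (hs : ∀ x ∈ s, q.IsRoot x) (hcard : q.natDegree ≤ s.card) (z : R) :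
    q.eval z = q.leadingCoeff * ∏ x ∈ s, (z - x) := by
  have hroots := roots_eq_of_natDegree_le_card_of_ne_zero hs hcard hq
  have hsplit : Multiset.card q.roots = q.natDegree :=
    le_antisymm (card_roots' q) (hroots ▸ hcard)
  conv_lhs => rw [← C_leadingCoeff_mul_prod_multiset_X_sub_C hsplit, hroots]
  simp [eval_prod]

theorem eval_eq_leadingCoeff_mul_prod_of_injective {n : ℕ} {q : R[X]} {a : Fin n → R}
    (hq : q ≠ 0) (hdeg : q.natDegree ≤ n) (ha : Function.Injective a)
    (hroots : ∀ i, q.IsRoot (a i)) (z : R) :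
    q.eval z = q.leadingCoeff * ∏ i, (z - a i) := by
  classical
  rw [eval_eq_leadingCoeff_mul_prod_of_natDegree_le_card hq (s := Finset.univ.image a)
    (by simpa using hroots) (by simpa [Finset.card_image_of_injective _ ha] using hdeg),
    Finset.prod_image fun i _ j _ h => ha h]

theorem add_eq_two_mul_of_natDegree_eq_two {q : R[X]} (hq : q.natDegree = 2) {z₁ z₂ t : R}
    (hz : z₁ ≠ z₂) (h₁ : q.IsRoot z₁) (h₂ : q.IsRoot z₂) (ht : q.derivative.IsRoot t) :
    z₁ + z₂ = 2 * t := by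
  have hq2 : q.coeff 2 ≠ 0 := by
    rw [← hq]; exact leadingCoeff_ne_zero.2 (ne_zero_of_natDegree_gt (n := 0) (by omega))
  have hlt : q.natDegree < 3 := by omega
  have hlt' : q.derivative.natDegree < 3 := (natDegree_derivative_le q).trans_lt (by omega)
  simp only [IsRoot, eval_eq_sum_range' hlt, eval_eq_sum_range' hlt', Finset.sum_range_succ,
    Finset.sum_range_zero, coeff_derivative] at h₁ h₂ ht
  have hsum : q.coeff 1 + q.coeff 2 * (z₁ + z₂) = 0 := by
    refine (mul_eq_zero.1 ?_).resolve_left (sub_ne_zero.2 hz)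
    linear_combination h₁ - h₂
  have h3 : q.coeff 3 = 0 := coeff_eq_zero_of_natDegree_lt hlt
  norm_num [h3] at ht
  refine sub_eq_zero.1 ((mul_eq_zero.1 ?_).resolve_left hq2)
  linear_combination hsum - ht

end Roots

theorem eval_add_sub_eval_sub_of_natDegree_le_four {K : Type*} [Field K] [CharZero K]
    {p : K[X]} (hp : p.natDegree ≤ 4) {t : K}
    (ht : (derivative (derivative (derivative p))).IsRoot t) (h : K) :
    p.eval (t + h) - p.eval (t - h) = 2 * h * p.derivative.eval t := by
  have hlt : p.natDegree < 5 := by omega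
  have hlt' : p.derivative.natDegree < 5 := (natDegree_derivative_le p).trans_lt (by omega)
  have hlt''' : (derivative (derivative (derivative p))).natDegree < 5 :=
    (natDegree_iterate_derivative p 3).trans_lt (by omega)
  have hc (n : ℕ) (hn : 4 < n) : p.coeff n = 0 := coeff_eq_zero_of_natDegree_lt (by omega)
  simp only [IsRoot, eval_eq_sum_range' hlt, eval_eq_sum_range' hlt', eval_eq_sum_range' hlt''',
    Finset.sum_range_succ, Finset.sum_range_zero, coeff_derivative] at ht ⊢
  norm_num [hc] at ht ⊢
  linear_combination h ^ 3 / 3 * ht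

theorem exists_isRoot_derivative_mem_Ioo {q : ℝ[X]} {a b : ℝ} (hab : a < b) (ha : q.IsRoot a)
    (hb : q.IsRoot b) : ∃ c ∈ Set.Ioo a b, q.derivative.IsRoot c := by
  obtain ⟨c, hc, hc'⟩ := exists_deriv_eq_zero hab q.continuousOn (ha.trans hb.symm)
  exact ⟨c, hc, by rwa [IsRoot, ← q.deriv]⟩

theorem mem_Ioo_of_strictMono_roots_derivative {n : ℕ} {q : ℝ[X]} {a : Fin (n + 1) → ℝ}
    {b : Fin n → ℝ} (hq : q ≠ 0) (hdeg : q.natDegree ≤ n + 1) (ha : StrictMono a)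
    (hqa : ∀ i, q.IsRoot (a i)) (hb : StrictMono b) (hqb : ∀ i, q.derivative.IsRoot (b i))
    (i : Fin n) : b i ∈ Set.Ioo (a i.castSucc) (a i.succ) := by
  classical
  have hq' : q.derivative ≠ 0 :=
    derivative_ne_zero.2 (natDegree_pos_of_eval₂_root hq (RingHom.id ℝ) (hqa 0) fun _ => id).ne'
  choose c hc hqc using fun i : Fin n =>
    exists_isRoot_derivative_mem_Ioo (ha i.castSucc_lt_succ) (hqa _) (hqa _)
  have hc_mono : StrictMono c := fun i j hij =>
    (hc i).2.trans ((ha.monotone (Fin.succ_le_castSucc_iff.2 hij)).trans_lt (hc j).1)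
  have hcard : (Finset.univ.image b).card = n := by
    simp [Finset.card_image_of_injective _ hb.injective]
  have hcb : c = b := by
    refine (Finset.orderEmbOfFin_unique hcard (fun j => ?_) hc_mono).trans
      (Finset.orderEmbOfFin_unique hcard (fun j => by simp) hb).symm
    refine mem_of_isRoot_of_natDegree_le_card hq' (by simpa using hqb) ?_ (hqc j)
    rw [hcard, natDegree_derivative]
    omega
  exact hcb ▸ hc i

end Polynomial

/-- **Anderson's theorem (degree 4).** Let `p` be a real polynomial of degree 4
with distinct real zeros `x₁ < x₂ < x₃ < x₄`, let `y₁ < y₂ < y₃` be the zeros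
of `p'`, `z₁ < z₂` the zeros of `p''` and `t₁` the zero of `p'''`.
If `x₂ < z₁` and `x₃ < z₂`, then `y₂ < t₁`. (Hence the symbolic sequences
`0102310210` and `0120132010` are non-realizable.) -/
theorem quartic_zero_arrangement_restriction
    (p : Polynomial ℝ) (hdeg : p.natDegree = 4)
    (x₁ x₂ x₃ x₄ y₁ y₂ y₃ z₁ z₂ t₁ : ℝ)
    (hx12 : x₁ < x₂) (hx23 : x₂ < x₃) (hx34 : x₃ < x₄)
    (hy12 : y₁ < y₂) (hy23 : y₂ < y₃) (hz12 : z₁ < z₂)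
    (hpx₁ : p.eval x₁ = 0) (hpx₂ : p.eval x₂ = 0)
    (hpx₃ : p.eval x₃ = 0) (hpx₄ : p.eval x₄ = 0)
    (hpy₁ : (derivative p).eval y₁ = 0) (hpy₂ : (derivative p).eval y₂ = 0)
    (hpy₃ : (derivative p).eval y₃ = 0)
    (hpz₁ : (derivative (derivative p)).eval z₁ = 0)
    (hpz₂ : (derivative (derivative p)).eval z₂ = 0)
    (hpt₁ : (derivative (derivative (derivative p))).eval t₁ = 0)
    (hcase₁ : x₂ < z₁) (hcase₂ : x₃ < z₂) :
    y₂ < t₁ := by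
  have hp : p ≠ 0 := ne_zero_of_natDegree_gt (n := 0) (by omega)
  have hp' : derivative p ≠ 0 := derivative_ne_zero.2 (by omega)
  have hx : StrictMono ![x₁, x₂, x₃, x₄] := by simp [*]
  have hy : StrictMono ![y₁, y₂, y₃] := by simp [*]
  have hxy := mem_Ioo_of_strictMono_roots_derivative hp hdeg.le hx
    (by simp [Fin.forall_fin_succ, *]) hy (by simp [Fin.forall_fin_succ, *])
  have hyz := mem_Ioo_of_strictMono_roots_derivative hp' (by simp [hdeg]) hy
    (by simp [Fin.forall_fin_succ, *]) (b := ![z₁, z₂]) (by simp [*])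
    (by simp [Fin.forall_fin_succ, *])
  have hmid : z₁ + z₂ = 2 * t₁ :=
    add_eq_two_mul_of_natDegree_eq_two (by simp [hdeg]) hz12.ne hpz₁ hpz₂ hpt₁
  have hmv := eval_add_sub_eval_sub_of_natDegree_le_four hdeg.le hpt₁ (t₁ - z₁)
  rw [show t₁ + (t₁ - z₁) = z₂ by linarith, sub_sub_cancel] at hmv
  have hy₂x₃ : y₂ < x₃ := by simpa using (hxy 1).2
  have hy₃x₄ : y₃ < x₄ := by simpa using (hxy 2).2
  obtain ⟨hy₁z₁, hz₁y₂⟩ : y₁ < z₁ ∧ z₁ < y₂ := by simpa using hyz 0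
  have hz₂y₃ : z₂ < y₃ := by simpa using (hyz 1).2
  have hpfac := eval_eq_leadingCoeff_mul_prod_of_injective hp hdeg.le hx.injective
    (by simp [Fin.forall_fin_succ, *])
  have hpfac' := eval_eq_leadingCoeff_mul_prod_of_injective hp' (by simp [hdeg]) hy.injective
    (by simp [Fin.forall_fin_succ, *])
  simp only [Fin.prod_univ_four, Fin.prod_univ_three, Matrix.cons_val, leadingCoeff_derivative,
    hdeg] at hpfac hpfac'
  set c := p.leadingCoeff
  have hc : 0 < c ^ 2 := sq_pos_of_ne_zero (leadingCoeff_ne_zero.2 hp)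
  by_contra! ht
  have hz₁p : 0 < c * p.eval z₁ := by
    have := mul_pos hc (mul_pos (mul_pos (sub_pos.2 (hx12.trans hcase₁)) (sub_pos.2 hcase₁))
      (mul_pos (sub_pos.2 (hz₁y₂.trans hy₂x₃)) (sub_pos.2 (hz₁y₂.trans (hy₂x₃.trans hx34)))))
    rw [hpfac]
    linear_combination this
  have hz₂p : c * p.eval z₂ < 0 := by
    have := mul_pos hc (mul_pos (mul_pos (sub_pos.2 (hx12.trans (hx23.trans hcase₂)))
      (sub_pos.2 (hx23.trans hcase₂))) (mul_pos (sub_pos.2 hcase₂) (sub_pos.2 (hz₂y₃.trans hy₃x₄))))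
    rw [hpfac]
    linear_combination this
  have ht₁p' : 0 ≤ c * (derivative p).eval t₁ := by
    have := mul_nonneg hc.le (mul_nonneg (mul_nonneg (sub_pos.2 (by linarith : y₁ < t₁)).le
      (sub_nonneg.2 ht)) (sub_pos.2 (ht.trans_lt hy23)).le)
    rw [hpfac']
    linear_combination 4 * this
  have := mul_nonneg (by linarith : 0 ≤ 2 * (t₁ - z₁)) ht₁p'
  linarith [congrArg (c * ·) hmv]
end

section
/- Let u, v be real numbers and let p(x) = x⁴ − x² + ux + v have four distinct real zeros x₁ < x₂ < x₃ < x₄. The zeros of p'' = 12x² − 2 are z₁ = −√(1/6) and z₂ = √(1/6). If x₂ < −√(1/6) and x₃ < √(1/6), then p(−√(1/6)) > 0 and p(√(1/6)) < 0, and consequently u < 0. -/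
set_option maxHeartbeats 1000000 in
/-- For the quartic `p(x) = x⁴ - x² + ux + v` with four distinct real zeros
`x₁ < x₂ < x₃ < x₄`: if `x₂ < -√(1/6)` and `x₃ < √(1/6)` (the zeros of
`p'' = 12x² - 2` being `±√(1/6)`), then `p(-√(1/6)) > 0`, `p(√(1/6)) < 0`,
and consequently `u < 0`. -/
theorem normalized_quartic_inequalities
    (u v x₁ x₂ x₃ x₄ : ℝ)
    (hx12 : x₁ < x₂) (hx23 : x₂ < x₃) (hx34 : x₃ < x₄)
    (hp₁ : x₁ ^ 4 - x₁ ^ 2 + u * x₁ + v = 0)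
    (hp₂ : x₂ ^ 4 - x₂ ^ 2 + u * x₂ + v = 0)
    (hp₃ : x₃ ^ 4 - x₃ ^ 2 + u * x₃ + v = 0)
    (hp₄ : x₄ ^ 4 - x₄ ^ 2 + u * x₄ + v = 0)
    (hcase₁ : x₂ < -Real.sqrt (1 / 6)) (hcase₂ : x₃ < Real.sqrt (1 / 6)) :
    0 < (-Real.sqrt (1 / 6)) ^ 4 - (-Real.sqrt (1 / 6)) ^ 2
        + u * (-Real.sqrt (1 / 6)) + v ∧
    (Real.sqrt (1 / 6)) ^ 4 - (Real.sqrt (1 / 6)) ^ 2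
        + u * Real.sqrt (1 / 6) + v < 0 ∧
    u < 0 := by
  set s := Real.sqrt (1 / 6) with hs_def
  have hs2 : s ^ 2 = 1 / 6 := Real.sq_sqrt (by norm_num)
  have hs0 : 0 < s := Real.sqrt_pos.mpr (by norm_num)
  -- divided differences: first order
  have g12 : x₁ ^ 3 + x₁ ^ 2 * x₂ + x₁ * x₂ ^ 2 + x₂ ^ 3 - (x₁ + x₂) + u = 0 := by
    have h : (x₂ - x₁) * (x₁ ^ 3 + x₁ ^ 2 * x₂ + x₁ * x₂ ^ 2 + x₂ ^ 3 - (x₁ + x₂) + u) = 0 := by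
      linear_combination hp₂ - hp₁
    exact (mul_eq_zero.mp h).resolve_left (sub_ne_zero.mpr hx12.ne')
  have g13 : x₁ ^ 3 + x₁ ^ 2 * x₃ + x₁ * x₃ ^ 2 + x₃ ^ 3 - (x₁ + x₃) + u = 0 := by
    have h : (x₃ - x₁) * (x₁ ^ 3 + x₁ ^ 2 * x₃ + x₁ * x₃ ^ 2 + x₃ ^ 3 - (x₁ + x₃) + u) = 0 := by
      linear_combination hp₃ - hp₁
    exact (mul_eq_zero.mp h).resolve_left (sub_ne_zero.mpr (hx12.trans hx23).ne')
  have g23 : x₂ ^ 3 + x₂ ^ 2 * x₃ + x₂ * x₃ ^ 2 + x₃ ^ 3 - (x₂ + x₃) + u = 0 := by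
    have h : (x₃ - x₂) * (x₂ ^ 3 + x₂ ^ 2 * x₃ + x₂ * x₃ ^ 2 + x₃ ^ 3 - (x₂ + x₃) + u) = 0 := by
      linear_combination hp₃ - hp₂
    exact (mul_eq_zero.mp h).resolve_left (sub_ne_zero.mpr hx23.ne')
  have g14 : x₁ ^ 3 + x₁ ^ 2 * x₄ + x₁ * x₄ ^ 2 + x₄ ^ 3 - (x₁ + x₄) + u = 0 := by
    have h : (x₄ - x₁) * (x₁ ^ 3 + x₁ ^ 2 * x₄ + x₁ * x₄ ^ 2 + x₄ ^ 3 - (x₁ + x₄) + u) = 0 := by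
      linear_combination hp₄ - hp₁
    exact (mul_eq_zero.mp h).resolve_left
      (sub_ne_zero.mpr ((hx12.trans hx23).trans hx34).ne')
  have g24 : x₂ ^ 3 + x₂ ^ 2 * x₄ + x₂ * x₄ ^ 2 + x₄ ^ 3 - (x₂ + x₄) + u = 0 := by
    have h : (x₄ - x₂) * (x₂ ^ 3 + x₂ ^ 2 * x₄ + x₂ * x₄ ^ 2 + x₄ ^ 3 - (x₂ + x₄) + u) = 0 := by
      linear_combination hp₄ - hp₂
    exact (mul_eq_zero.mp h).resolve_left (sub_ne_zero.mpr (hx23.trans hx34).ne')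
  -- second order
  have hH3 : x₁ ^ 2 + x₁ * x₂ + x₂ ^ 2 + (x₁ + x₂) * x₃ + x₃ ^ 2 - 1 = 0 := by
    have h : (x₁ - x₂) * (x₁ ^ 2 + x₁ * x₂ + x₂ ^ 2 + (x₁ + x₂) * x₃ + x₃ ^ 2 - 1) = 0 := by
      linear_combination g13 - g23
    exact (mul_eq_zero.mp h).resolve_left (sub_ne_zero.mpr hx12.ne)
  have hH4 : x₁ ^ 2 + x₁ * x₂ + x₂ ^ 2 + (x₁ + x₂) * x₄ + x₄ ^ 2 - 1 = 0 := by
    have h : (x₁ - x₂) * (x₁ ^ 2 + x₁ * x₂ + x₂ ^ 2 + (x₁ + x₂) * x₄ + x₄ ^ 2 - 1) = 0 := by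
      linear_combination g14 - g24
    exact (mul_eq_zero.mp h).resolve_left (sub_ne_zero.mpr hx12.ne)
  -- third order : e1 = 0
  have hx4 : x₄ = -(x₁ + x₂ + x₃) := by
    have h : (x₃ - x₄) * (x₁ + x₂ + x₃ + x₄) = 0 := by
      linear_combination hH3 - hH4
    have := (mul_eq_zero.mp h).resolve_left (sub_ne_zero.mpr hx34.ne)
    linarith
  subst hx4
  -- key factorization identity
  have hkey : ∀ t : ℝ, t ^ 4 - t ^ 2 + u * t + v
      = (t - x₁) * (t - x₂) * (t - x₃) * (t - -(x₁ + x₂ + x₃)) := by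
    intro t
    linear_combination (t ^ 2 - (x₁ + x₂) * t + x₁ * x₂) * hH3 + (t - x₁) * g12 + hp₁
  -- ordering facts
  have hx2s : x₂ < -s := hcase₁
  have hx1s : x₁ < -s := lt_trans hx12 hx2s
  have hx4s : s < -(x₁ + x₂ + x₃) := by linarith
  -- x₃ > -s
  have hx3s : -s < x₃ := by
    by_contra h
    push_neg at h
    have h1 : 3 * s < -(x₁ + x₂ + x₃) := by linarith
    have h1' : 0 < -(x₁ + x₂ + x₃) - 3 * s := by linarith
    have h2 : (3 * s) ^ 2 < (x₁ + x₂ + x₃) ^ 2 := by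
      nlinarith [sq_nonneg (x₁ + x₂ + x₃ + 3 * s), mul_pos h1' (show (0:ℝ) < 3 * s by linarith)]
    nlinarith [sq_nonneg (x₁ - x₂), sq_nonneg (x₁ - x₃), sq_nonneg (x₂ - x₃), hH3, h2, hs2]
  have hPm : 0 < (-s) ^ 4 - (-s) ^ 2 + u * (-s) + v := by
    rw [hkey (-s)]
    have h1 : 0 < -s - x₁ := by linarith
    have h2 : 0 < -s - x₂ := by linarith
    have h3 : 0 < x₃ + s := by linarith
    have h4 : 0 < s - (x₁ + x₂ + x₃) := by linarith
    have hprod := mul_pos (mul_pos h1 h2) (mul_pos h3 h4)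
    nlinarith [hprod]
  have hPp : s ^ 4 - s ^ 2 + u * s + v < 0 := by
    rw [hkey s]
    have h1 : 0 < s - x₁ := by linarith
    have h2 : 0 < s - x₂ := by linarith
    have h3 : 0 < s - x₃ := by linarith
    have h4 : 0 < -(x₁ + x₂ + x₃) - s := by linarith
    have hprod := mul_pos (mul_pos (mul_pos h1 h2) h3) h4
    nlinarith [hprod]
  refine ⟨hPm, hPp, ?_⟩
  nlinarith [hPm, hPp, hs0]
end

section
/- Let p : ℝ → ℝ be a monic real polynomial of degree 4 with four distinct real zeros. Then there exist real numbers α (a shift), λ > 0 (a scaling) and u, v ∈ ℝ such that the polynomial q(x) = λ⁻⁴·p(λx + α) equals x⁴ − x² + ux + v; in particular, after the shift x ↦ x + α removing the cubic term, the coefficient at x² is strictly negative. -/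
open Polynomial

private lemma quartic_expand (a b c d : ℝ) :
    (X - C a) * (X - C b) * (X - C c) * (X - C d) =
      X ^ 4 - C (a + b + c + d) * X ^ 3 + C (a*b + a*c + a*d + b*c + b*d + c*d) * X ^ 2
        - C (a*b*c + a*b*d + a*c*d + b*c*d) * X + C (a*b*c*d) := by
  simp only [C_add, C_mul]
  ring

/-- Any monic real polynomial of degree 4 with four distinct real zeros can be
put in the normal form `x⁴ - x² + ux + v` by a linear change of variable
`x ↦ λx + α` (with `λ > 0`) and rescaling by `λ⁻⁴`; in particular the shift
`x ↦ x + α` kills the cubic term and leaves a strictly negative coefficient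
at `x²`. -/
theorem monic_quartic_normal_form
    (p : Polynomial ℝ) (hmonic : p.Monic) (hdeg : p.natDegree = 4)
    (x₁ x₂ x₃ x₄ : ℝ)
    (hx12 : x₁ < x₂) (hx23 : x₂ < x₃) (hx34 : x₃ < x₄)
    (hp₁ : p.eval x₁ = 0) (hp₂ : p.eval x₂ = 0)
    (hp₃ : p.eval x₃ = 0) (hp₄ : p.eval x₄ = 0) :
    ∃ α lam u v : ℝ, 0 < lam ∧
      (∀ x : ℝ, lam⁻¹ ^ 4 * p.eval (lam * x + α) = x ^ 4 - x ^ 2 + u * x + v) ∧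
      (p.comp (X + C α)).coeff 3 = 0 ∧
      (p.comp (X + C α)).coeff 2 < 0 := by
  have h12 : x₁ ≠ x₂ := ne_of_lt hx12
  have h13 : x₁ ≠ x₃ := ne_of_lt (lt_trans hx12 hx23)
  have h14 : x₁ ≠ x₄ := ne_of_lt (lt_trans (lt_trans hx12 hx23) hx34)
  have h23 : x₂ ≠ x₃ := ne_of_lt hx23
  have h24 : x₂ ≠ x₄ := ne_of_lt (lt_trans hx23 hx34)
  have h34 : x₃ ≠ x₄ := ne_of_lt hx34
  -- p is the product of its linear factors
  set q : ℝ[X] := (X - C x₁) * (X - C x₂) * (X - C x₃) * (X - C x₄) with hq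
  have hqmonic : q.Monic := by
    apply Monic.mul; apply Monic.mul; apply Monic.mul
    all_goals exact monic_X_sub_C _
  have hn1 : (X - C x₁ : ℝ[X]) ≠ 0 := X_sub_C_ne_zero x₁
  have hn2 : (X - C x₂ : ℝ[X]) ≠ 0 := X_sub_C_ne_zero x₂
  have hn3 : (X - C x₃ : ℝ[X]) ≠ 0 := X_sub_C_ne_zero x₃
  have hn4 : (X - C x₄ : ℝ[X]) ≠ 0 := X_sub_C_ne_zero x₄
  have hqdeg : q.natDegree = 4 := by
    rw [hq, natDegree_mul (mul_ne_zero (mul_ne_zero hn1 hn2) hn3) hn4,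
        natDegree_mul (mul_ne_zero hn1 hn2) hn3, natDegree_mul hn1 hn2]
    simp
  have hpdeg : p.degree = 4 := by
    rw [degree_eq_natDegree hmonic.ne_zero, hdeg]; rfl
  have hqdeg' : q.degree = 4 := by
    rw [degree_eq_natDegree hqmonic.ne_zero, hqdeg]; rfl
  have hs : ({x₁, x₂, x₃, x₄} : Finset ℝ).card = 4 := by
    rw [Finset.card_insert_of_notMem (by simp [h12, h13, h14]),
        Finset.card_insert_of_notMem (by simp [h23, h24]),
        Finset.card_insert_of_notMem (by simp [h34]), Finset.card_singleton]
  have hpq : p = q := by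
    refine Polynomial.eq_of_degree_sub_lt_of_eval_finset_eq {x₁, x₂, x₃, x₄} ?_ ?_
    · rcases eq_or_ne p q with h | h
      · rw [h, sub_self, degree_zero, hs]
        exact_mod_cast WithBot.bot_lt_coe 4
      · have hlt := Polynomial.degree_sub_lt (hpdeg.trans hqdeg'.symm)
          hmonic.ne_zero (by rw [hmonic.leadingCoeff, hqmonic.leadingCoeff])
        calc (p - q).degree < p.degree := hlt
          _ = 4 := hpdeg
          _ ≤ (({x₁, x₂, x₃, x₄} : Finset ℝ).card : WithBot ℕ) := by
              rw [hs]; norm_num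
    · intro x hx
      have hqx : q.eval x₁ = 0 ∧ q.eval x₂ = 0 ∧ q.eval x₃ = 0 ∧ q.eval x₄ = 0 := by
        refine ⟨?_, ?_, ?_, ?_⟩ <;> simp [hq]
      simp only [Finset.mem_insert, Finset.mem_singleton] at hx
      rcases hx with rfl | rfl | rfl | rfl
      · rw [hp₁, hqx.1]
      · rw [hp₂, hqx.2.1]
      · rw [hp₃, hqx.2.2.1]
      · rw [hp₄, hqx.2.2.2]
  -- shift
  set α : ℝ := (x₁ + x₂ + x₃ + x₄) / 4 with hα
  set y₁ : ℝ := x₁ - α with hy1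
  set y₂ : ℝ := x₂ - α with hy2
  set y₃ : ℝ := x₃ - α with hy3
  set y₄ : ℝ := x₄ - α with hy4
  have hsum : y₁ + y₂ + y₃ + y₄ = 0 := by rw [hy1, hy2, hy3, hy4, hα]; ring
  set e2 : ℝ := y₁*y₂ + y₁*y₃ + y₁*y₄ + y₂*y₃ + y₂*y₄ + y₃*y₄ with he2
  set e3 : ℝ := y₁*y₂*y₃ + y₁*y₂*y₄ + y₁*y₃*y₄ + y₂*y₃*y₄ with he3
  set e4 : ℝ := y₁*y₂*y₃*y₄ with he4
  have hy12 : y₁ ≠ y₂ := by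
    rw [hy1, hy2]; intro h; apply h12; linarith [sub_left_injective.eq_iff.mp h]
  have he2eq : e2 = -((y₁^2 + y₂^2 + y₃^2 + y₄^2) / 2) := by
    have hz : (y₁ + y₂ + y₃ + y₄)^2 = 0 := by rw [hsum]; ring
    rw [he2]; linear_combination (1/2 : ℝ) * hz
  have he2neg : e2 < 0 := by
    have hpos : 0 < (y₁ - y₂) * (y₁ - y₂) := mul_self_pos.mpr (sub_ne_zero.mpr hy12)
    rw [he2eq]; nlinarith [sq_nonneg y₃, sq_nonneg y₄, sq_nonneg (y₁ + y₂)]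
  set lam : ℝ := Real.sqrt (-e2) with hlam
  have hlampos : 0 < lam := Real.sqrt_pos.mpr (by linarith)
  have hlamsq : lam ^ 2 = -e2 := Real.sq_sqrt (by linarith)
  have hlamne : lam ≠ 0 := ne_of_gt hlampos
  have hcomp : p.comp (X + C α) =
      X ^ 4 - C (y₁ + y₂ + y₃ + y₄) * X ^ 3 + C e2 * X ^ 2 - C e3 * X + C e4 := by
    rw [hpq, hq, he2, he3, he4]
    have hXC : ∀ a : ℝ, (X - C a).comp (X + C α) = X - C (a - α) := by
      intro a; rw [sub_comp, X_comp, C_comp, C_sub]; ring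
    rw [mul_comp, mul_comp, mul_comp, hXC, hXC, hXC, hXC, ← hy1, ← hy2, ← hy3, ← hy4,
      quartic_expand]
  refine ⟨α, lam, -e3 / lam ^ 3, e4 / lam ^ 4, hlampos, ?_, ?_, ?_⟩
  · intro x
    have hev : p.eval (lam * x + α) =
        (lam * x - y₁) * (lam * x - y₂) * (lam * x - y₃) * (lam * x - y₄) := by
      rw [hpq, hq]
      simp only [eval_mul, eval_sub, eval_X, eval_C, hy1, hy2, hy3, hy4]
      ring
    have he2' : e2 = -(lam ^ 2) := by linarith
    have hexp : (lam * x - y₁) * (lam * x - y₂) * (lam * x - y₃) * (lam * x - y₄)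
        = lam^4 * x^4 - lam^3 * (y₁+y₂+y₃+y₄) * x^3 + lam^2 * e2 * x^2 - lam * e3 * x + e4 := by
      rw [he2, he3, he4]; ring
    rw [hev, hexp, hsum, he2']
    field_simp
    ring
  · rw [hcomp, hsum]
    simp [coeff_X_pow]
  · have hc2 : (p.comp (X + C α)).coeff 2 = e2 := by
      rw [hcomp, hsum]; simp [coeff_X_pow]
    rw [hc2]; exact he2neg
end

section
/- Let g : ℝ → ℝ be a continuous, strictly convex function on an interval, let y₁ < y₂ be the two zeros of g (so g < 0 on (y₁, y₂) and g > 0 outside [y₁, y₂] within its domain), and let x₁ < y₁ < x₂ < y₂ be points with ∫_{x₁}^{x₂} g(t) dt = 0. Then y₁ − x₁ < x₂ − y₁. -/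
open Set

/-- Let `g` be continuous and strictly convex on an open interval `I`, with
zeros exactly `y₁ < y₂` (negative strictly between them, positive elsewhere
on `I`), and let `x₁ < y₁ < x₂ < y₂` be points of `I` with
`∫_{x₁}^{x₂} g = 0`. Then `y₁ - x₁ < x₂ - y₁`. -/
theorem convex_integral_zero_left_inequality
    (g : ℝ → ℝ) (I : Set ℝ) (hIopen : IsOpen I) (hIconn : I.OrdConnected)
    (hcont : ContinuousOn g I) (hconv : StrictConvexOn ℝ I g)
    (x₁ y₁ x₂ y₂ : ℝ)
    (hx₁I : x₁ ∈ I) (hy₁I : y₁ ∈ I) (hx₂I : x₂ ∈ I) (hy₂I : y₂ ∈ I)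
    (h₁ : x₁ < y₁) (h₂ : y₁ < x₂) (h₃ : x₂ < y₂)
    (hgy₁ : g y₁ = 0) (hgy₂ : g y₂ = 0)
    (hneg : ∀ x ∈ I, y₁ < x → x < y₂ → g x < 0)
    (hpos : ∀ x ∈ I, x < y₁ ∨ y₂ < x → 0 < g x)
    (hint : (∫ t in x₁..x₂, g t) = 0) :
    y₁ - x₁ < x₂ - y₁ := by
  by_contra hcon
  push_neg at hcon
  set c : ℝ := 2 * y₁ - x₂ with hc
  have hc1 : x₁ ≤ c := by linarith
  have hc2 : c < y₁ := by linarith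
  have hsub : Icc x₁ x₂ ⊆ I := hIconn.out hx₁I hx₂I
  -- membership helpers
  have hmem : ∀ x : ℝ, x₁ ≤ x → x ≤ x₂ → x ∈ I := fun x hx hx' => hsub ⟨hx, hx'⟩
  -- integrability
  have hgI : ∀ a b : ℝ, x₁ ≤ a → a ≤ x₂ → x₁ ≤ b → b ≤ x₂ →
      IntervalIntegrable g MeasureTheory.volume a b := by
    intro a b ha ha' hb hb'
    apply ContinuousOn.intervalIntegrable
    apply hcont.mono
    intro x hx
    apply hmem
    · exact le_trans (le_min ha hb) hx.1
    · exact le_trans hx.2 (max_le ha' hb')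
  -- continuity of reflected function on [c, y₁]
  have hrefl : ContinuousOn (fun t => g (2 * y₁ - t)) (Icc c y₁) := by
    apply hcont.comp (by fun_prop)
    intro x hx
    apply hmem <;> simp only [hc] at hx ⊢ <;> cases hx <;> linarith
  have hirefl : IntervalIntegrable (fun t => g (2 * y₁ - t)) MeasureTheory.volume c y₁ := by
    apply ContinuousOn.intervalIntegrable
    rwa [uIcc_of_le hc2.le]
  have higc : IntervalIntegrable g MeasureTheory.volume c y₁ :=
    hgI c y₁ hc1 (by linarith) h₁.le h₂.le
  -- positivity of the symmetrized integrand on (c, y₁)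
  have hpt : ∀ t ∈ Ioo c y₁, 0 < g t + g (2 * y₁ - t) := by
    intro t ht
    have htI : t ∈ I := hmem t (by linarith [ht.1]) (by linarith [ht.2])
    have ht2I : 2 * y₁ - t ∈ I := hmem _ (by linarith [ht.2]) (by linarith [ht.1])
    have hne : t ≠ 2 * y₁ - t := by intro h; have := ht.2; linarith [ht.2]
    have := hconv.2 htI ht2I hne (by norm_num : (0:ℝ) < 1/2) (by norm_num : (0:ℝ) < 1/2)
      (by norm_num)
    have heq : (1/2 : ℝ) • t + (1/2 : ℝ) • (2 * y₁ - t) = y₁ := by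
      simp [smul_eq_mul]; ring
    rw [heq, hgy₁] at this
    simp only [smul_eq_mul] at this
    linarith
  -- strict positivity of symmetrized integral
  have hkey : 0 < ∫ t in c..y₁, (g t + g (2 * y₁ - t)) :=
    intervalIntegral.intervalIntegral_pos_of_pos_on (higc.add hirefl) hpt hc2
  -- reflection identity
  have hreflint : (∫ t in c..y₁, g (2 * y₁ - t)) = ∫ t in y₁..x₂, g t := by
    rw [intervalIntegral.integral_comp_sub_left g (2 * y₁)]
    have e1 : 2 * y₁ - y₁ = y₁ := by ring
    have e2 : 2 * y₁ - c = x₂ := by rw [hc]; ring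
    rw [e1, e2]
  -- split the total integral
  have hsplit1 : (∫ t in x₁..x₂, g t) = (∫ t in x₁..c, g t) + ∫ t in c..x₂, g t := by
    rw [intervalIntegral.integral_add_adjacent_intervals
      (hgI x₁ c le_rfl (by linarith) hc1 (by linarith))
      (hgI c x₂ hc1 (by linarith) (by linarith) le_rfl)]
  have hsplit2 : (∫ t in c..x₂, g t) = (∫ t in c..y₁, g t) + ∫ t in y₁..x₂, g t := by
    rw [intervalIntegral.integral_add_adjacent_intervals higc
      (hgI y₁ x₂ h₁.le h₂.le (by linarith) le_rfl)]
  have hadd : (∫ t in c..y₁, (g t + g (2 * y₁ - t)))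
      = (∫ t in c..y₁, g t) + ∫ t in c..y₁, g (2 * y₁ - t) :=
    intervalIntegral.integral_add higc hirefl
  have hfirst : 0 ≤ ∫ t in x₁..c, g t := by
    apply intervalIntegral.integral_nonneg hc1
    intro u hu
    exact le_of_lt (hpos u (hmem u hu.1 (by linarith [hu.2])) (Or.inl (by linarith [hu.2])))
  linarith [hkey, hfirst, hsplit1, hsplit2, hadd, hreflint, hint]
end

section
/- Let g : ℝ → ℝ be a differentiable, strictly convex function on an interval, with zeros y₁ < y₂, attaining its minimum at z₁ ∈ (y₁, y₂) (so g'(z₁) = 0). Let x₂, x₃ be points with y₁ < x₂ < z₁ < y₂ < x₃ and ∫_{x₂}^{x₃} g(t) dt = 0. Then x₃ − y₂ < √((y₂ − z₁)² + 2(y₂ − z₁)(z₁ − x₂)). -/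
open Set

/-- Let `g` be differentiable and strictly convex on an open interval `I`, with
zeros exactly `y₁ < y₂` (negative strictly between them, positive elsewhere on
`I`), attaining its minimum at `z₁ ∈ (y₁, y₂)` where `g'(z₁) = 0`. If
`y₁ < x₂ < z₁ < y₂ < x₃` are points of `I` with `∫_{x₂}^{x₃} g = 0`, then
`x₃ - y₂ < √((y₂ - z₁)² + 2(y₂ - z₁)(z₁ - x₂))`. -/
theorem convex_integral_zero_right_inequality
    (g : ℝ → ℝ) (I : Set ℝ) (hIopen : IsOpen I) (hIconn : I.OrdConnected)
    (hdiff : DifferentiableOn ℝ g I) (hconv : StrictConvexOn ℝ I g)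
    (y₁ x₂ z₁ y₂ x₃ : ℝ)
    (hy₁I : y₁ ∈ I) (hx₂I : x₂ ∈ I) (hz₁I : z₁ ∈ I) (hy₂I : y₂ ∈ I)
    (hx₃I : x₃ ∈ I)
    (h₁ : y₁ < x₂) (h₂ : x₂ < z₁) (h₃ : z₁ < y₂) (h₄ : y₂ < x₃)
    (hgy₁ : g y₁ = 0) (hgy₂ : g y₂ = 0)
    (hneg : ∀ x ∈ I, y₁ < x → x < y₂ → g x < 0)
    (hpos : ∀ x ∈ I, x < y₁ ∨ y₂ < x → 0 < g x)
    (hmin : IsMinOn g I z₁) (hcrit : deriv g z₁ = 0)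
    (hint : (∫ t in x₂..x₃, g t) = 0) :
    x₃ - y₂ < Real.sqrt ((y₂ - z₁) ^ 2 + 2 * (y₂ - z₁) * (z₁ - x₂)) := by
  set s := deriv g y₂ with hs
  have hdAt : ∀ x ∈ I, DifferentiableAt ℝ g x := fun x hx =>
    (hdiff x hx).differentiableAt (hIopen.mem_nhds hx)
  have hcont : ContinuousOn g I := hdiff.continuousOn
  have hgz₁ : g z₁ < 0 := hneg z₁ hz₁I (h₁.trans h₂) h₃
  -- slope from z₁ to y₂ is below s
  have hslope : slope g z₁ y₂ < s := hconv.slope_lt_deriv hz₁I hy₂I h₃ (hdAt y₂ hy₂I)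
  have hslope' : (g y₂ - g z₁) / (y₂ - z₁) < s := by rwa [slope_def_field] at hslope
  have hz₁y₂ : (0:ℝ) < y₂ - z₁ := by linarith
  rw [div_lt_iff₀ hz₁y₂] at hslope'
  have hspos : 0 < s := by nlinarith
  have hz₁tan : 0 < g z₁ + s * (y₂ - z₁) := by nlinarith [hgy₂]
  -- tangent line at y₂ lies strictly below g away from y₂
  have htan : ∀ x ∈ I, x ≠ y₂ → s * (x - y₂) < g x := by
    intro x hx hne
    rcases lt_or_gt_of_ne hne with h | h
    · have h5 := hconv.slope_lt_deriv hx hy₂I h (hdAt y₂ hy₂I)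
      rw [slope_def_field, div_lt_iff₀ (by linarith : (0:ℝ) < y₂ - x)] at h5
      nlinarith [hgy₂]
    · have h5 := hconv.deriv_lt_slope hy₂I hx h (hdAt y₂ hy₂I)
      rw [slope_def_field, lt_div_iff₀ (by linarith : (0:ℝ) < x - y₂)] at h5
      nlinarith [hgy₂]
  -- g x > g z₁ for x < z₁
  have hgmin : ∀ x ∈ I, x < z₁ → g z₁ < g x := by
    intro x hx h
    have h5 := hconv.slope_lt_deriv hx hz₁I h (hdAt z₁ hz₁I)
    rw [hcrit, slope_def_field, div_lt_iff₀ (by linarith : (0:ℝ) < z₁ - x)] at h5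
    linarith
  -- integrability
  have hci : ∀ a b : ℝ, a ∈ I → b ∈ I → IntervalIntegrable (fun t => g t - s * (t - y₂)) MeasureTheory.volume a b := by
    intro a b ha hb
    apply ContinuousOn.intervalIntegrable
    exact ContinuousOn.sub (hcont.mono (hIconn.uIcc_subset ha hb))
      ((continuous_const.mul (continuous_id.sub continuous_const)).continuousOn)
  have hgi : ∀ a b : ℝ, a ∈ I → b ∈ I → IntervalIntegrable g MeasureTheory.volume a b := by
    intro a b ha hb
    apply ContinuousOn.intervalIntegrable
    exact hcont.mono (hIconn.uIcc_subset ha hb)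
  -- lower bound on [x₂, z₁]
  have I1 : s * (z₁ - x₂)^2 / 2 ≤ ∫ t in x₂..z₁, (g t - s * (t - y₂)) := by
    have hle : ∀ t ∈ Icc x₂ z₁, s * (z₁ - t) ≤ g t - s * (t - y₂) := by
      intro t ht
      rcases eq_or_lt_of_le ht.2 with rfl | hlt
      · nlinarith
      · have htI : t ∈ I := hIconn.out hx₂I hz₁I ht
        have := hgmin t htI hlt
        nlinarith
    calc s * (z₁ - x₂)^2 / 2 = ∫ t in x₂..z₁, s * (z₁ - t) := by
          rw [intervalIntegral.integral_const_mul,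
            intervalIntegral.integral_sub intervalIntegrable_const intervalIntegral.intervalIntegrable_id,
            integral_id, intervalIntegral.integral_const, smul_eq_mul]
          ring
      _ ≤ _ := by
          apply intervalIntegral.integral_mono_on h₂.le ?_ (hci x₂ z₁ hx₂I hz₁I) hle
          exact (Continuous.intervalIntegrable (continuous_const.mul (continuous_const.sub continuous_id)) _ _)
  -- strict positivity on [z₁, y₂]
  have I2 : 0 < ∫ t in z₁..y₂, (g t - s * (t - y₂)) := by
    apply intervalIntegral.intervalIntegral_pos_of_pos_on (hci z₁ y₂ hz₁I hy₂I) ?_ h₃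
    intro x hx
    have hxI : x ∈ I := hIconn.out hz₁I hy₂I ⟨hx.1.le, hx.2.le⟩
    have := htan x hxI (ne_of_lt hx.2)
    linarith
  -- nonnegativity on [y₂, x₃]
  have I3 : 0 ≤ ∫ t in y₂..x₃, (g t - s * (t - y₂)) := by
    apply intervalIntegral.integral_nonneg h₄.le
    intro u hu
    rcases eq_or_lt_of_le hu.1 with rfl | hlt
    · simp [hgy₂]
    · have huI : u ∈ I := hIconn.out hy₂I hx₃I hu
      have := htan u huI (ne_of_gt hlt)
      linarith
  -- total integral of g - tangent
  have hsplit : (∫ t in x₂..x₃, (g t - s * (t - y₂)))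
      = (∫ t in x₂..z₁, (g t - s * (t - y₂))) + (∫ t in z₁..y₂, (g t - s * (t - y₂)))
        + (∫ t in y₂..x₃, (g t - s * (t - y₂))) := by
    rw [intervalIntegral.integral_add_adjacent_intervals (hci x₂ z₁ hx₂I hz₁I) (hci z₁ y₂ hz₁I hy₂I),
      intervalIntegral.integral_add_adjacent_intervals (hci x₂ y₂ hx₂I hy₂I) (hci y₂ x₃ hy₂I hx₃I)]
  have hT : (∫ t in x₂..x₃, (g t - s * (t - y₂)))
      = s * ((x₂ - y₂)^2 - (x₃ - y₂)^2) / 2 := by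
    rw [intervalIntegral.integral_sub (hgi x₂ x₃ hx₂I hx₃I)
      (Continuous.intervalIntegrable (by fun_prop : Continuous fun t : ℝ => s * (t - y₂)) _ _), hint,
      intervalIntegral.integral_const_mul,
      intervalIntegral.integral_sub intervalIntegral.intervalIntegrable_id intervalIntegrable_const,
      integral_id, intervalIntegral.integral_const, smul_eq_mul]
    ring
  have hkey : s * (z₁ - x₂)^2 / 2 < s * ((x₂ - y₂)^2 - (x₃ - y₂)^2) / 2 := by
    rw [← hT, hsplit]; linarith
  have hsq : (x₃ - y₂)^2 < (y₂ - z₁) ^ 2 + 2 * (y₂ - z₁) * (z₁ - x₂) := by nlinarith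
  exact Real.lt_sqrt_of_sq_lt hsq
end

section
/- Let f(x) = a₀ + Σ_{k=1}^{n} (aₖ cos kx + bₖ sin kx) be a real trigonometric polynomial of degree n (with aₙ² + bₙ² ≠ 0) having exactly 2n distinct real zeros in the period [0, 2π). Then its derivative f' is again a trigonometric polynomial of degree n and also has exactly 2n distinct real zeros in [0, 2π). -/
/-!
On `[0, 2π)` a trigonometric polynomial of degree `n` has at most `2n` zeros, since under
`z = e^{ix}` it becomes `z^{-n}` times a complex polynomial of degree at most `2n`. Conversely, if
`f` has `2n` zeros, Rolle's theorem gives a zero of `f'` strictly between any two cyclically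
consecutive ones (the last gap wrapping around through `2π`), so `f'`, a trigonometric polynomial
of the same degree, has at least and hence exactly `2n` zeros.
-/

open Set Real Polynomial Function

section Periodic

variable {g : ℝ → ℝ} {T : ℝ}

theorem periodic_deriv (hg : Periodic g T) : Periodic (deriv g) T := fun x => by
  rw [← deriv_comp_add_const]
  exact congrArg (deriv · x) (funext hg)

theorem Function.Periodic.encard_zeros_Ico_le (hg : Periodic g T) (hT : 0 < T) (a : ℝ) :
    {x ∈ Ico a (a + T) | g x = 0}.encard ≤ {x ∈ Ico 0 T | g x = 0}.encard := by
  refine encard_le_encard_of_injOn (f := toIcoMod hT 0) ?_ ?_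
  · intro x hx
    refine ⟨toIcoMod_mem_Ico' hT x, ?_⟩
    rw [← self_sub_toIcoDiv_zsmul, hg.sub_zsmul_eq]
    exact hx.2
  · intro x hx y hy hxy
    rw [← (toIcoMod_eq_self hT).2 hx.1, ← (toIcoMod_eq_self hT).2 hy.1,
      ← toIcoMod_toIcoMod hT a 0 x, hxy, toIcoMod_toIcoMod]

theorem Function.Periodic.encard_zeros_le_encard_zeros_deriv (hg : Periodic g T) (hT : 0 < T)
    (hc : Continuous g) (hfin : {x ∈ Ico 0 T | g x = 0}.Finite) :
    {x ∈ Ico 0 T | g x = 0}.encard ≤ {x ∈ Ico 0 T | deriv g x = 0}.encard := by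
  obtain hZ | hZ := {x ∈ Ico 0 T | g x = 0}.eq_empty_or_nonempty
  · rw [hZ, encard_empty]
    exact zero_le
  set s := hfin.toFinset
  have hs : s.Nonempty := hfin.toFinset_nonempty.2 hZ
  set m := s.min' hs
  have hm : m ∈ Ico 0 T ∧ g m = 0 := hfin.mem_toFinset.1 (s.min'_mem hs)
  set C := {x ∈ Ioo m (m + T) | deriv g x = 0}
  have hC : C.encard ≤ {x ∈ Ico 0 T | deriv g x = 0}.encard :=
    (encard_le_encard fun _ hx => And.intro (Ioo_subset_Ico_self hx.1) hx.2).trans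
      ((periodic_deriv hg).encard_zeros_Ico_le hT m)
  refine le_trans ?_ hC
  -- The zeros in `s`, closed up by `m + T`, are interleaved with the critical points in `C`.
  rcases C.finite_or_infinite with hCfin | hCinf
  · have hsC := Finset.card_le_of_interleaved (s := insert (m + T) s) (t := hCfin.toFinset) ?_
    · have hmT : m + T ∉ s := fun h => by linarith [(hfin.mem_toFinset.1 h).1.2, hm.1.1]
      rw [Finset.card_insert_of_notMem hmT] at hsC
      rw [hfin.encard_eq_coe_toFinset_card, hCfin.encard_eq_coe_toFinset_card]
      exact_mod_cast Nat.le_of_add_le_add_right hsC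
    have hzero : ∀ z ∈ insert (m + T) s, z ∈ Icc m (m + T) ∧ g z = 0 := by
      simp only [Finset.mem_insert, forall_eq_or_imp]
      refine ⟨⟨⟨by linarith, le_rfl⟩, by rw [hg m, hm.2]⟩, fun z hz => ?_⟩
      have hz' := hfin.mem_toFinset.1 hz
      exact ⟨⟨s.min'_le z hz, by linarith [hz'.1.2, hm.1.1]⟩, hz'.2⟩
    intro x hx y hy hxy _
    obtain ⟨z, hz, hdz⟩ := exists_deriv_eq_zero hxy hc.continuousOn
      (by rw [(hzero x hx).2, (hzero y hy).2])
    exact ⟨z, hCfin.mem_toFinset.2 ⟨⟨(hzero x hx).1.1.trans_lt hz.1,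
      hz.2.trans_le (hzero y hy).1.2⟩, hdz⟩, hz⟩
  · simp [hCinf.encard_eq]

end Periodic

noncomputable def trigSum (n : ℕ) (a b : ℕ → ℝ) (x : ℝ) : ℝ :=
  a 0 + ∑ k ∈ Finset.Icc 1 n, (a k * cos (k * x) + b k * sin (k * x))

theorem periodic_trigSum (n : ℕ) (a b : ℕ → ℝ) : Periodic (trigSum n a b) (2 * π) := fun x => by
  simp only [trigSum, mul_add, cos_add_nat_mul_two_pi, sin_add_nat_mul_two_pi]

theorem hasDerivAt_trigSum (n : ℕ) (a b : ℕ → ℝ) (x : ℝ) :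
    HasDerivAt (trigSum n a b) (trigSum n (fun k => k * b k) (fun k => -(k * a k)) x) x := by
  have hterm (k : ℕ) : HasDerivAt (fun y => a k * cos (k * y) + b k * sin (k * y))
      (k * b k * cos (k * x) + -(k * a k) * sin (k * x)) x := by
    have hk := (hasDerivAt_id' x).const_mul (k : ℝ)
    exact ((hk.cos.const_mul (a k)).fun_add (hk.sin.const_mul (b k))).congr_deriv (by ring)
  exact ((HasDerivAt.fun_sum fun k _ => hterm k).const_add (a 0)).congr_deriv (by simp [trigSum])

theorem deriv_trigSum (n : ℕ) (a b : ℕ → ℝ) :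
    deriv (trigSum n a b) = trigSum n (fun k => k * b k) (fun k => -(k * a k)) :=
  funext fun x => (hasDerivAt_trigSum n a b x).deriv

/-- Clearing denominators in `cos kx = (z^k + z^{-k}) / 2`, `sin kx = (z^k - z^{-k}) / 2i` with
`z = e^{ix}` turns `2 z^n f(x)` into this polynomial in `z`. -/
noncomputable def trigSumPoly (n : ℕ) (a b : ℕ → ℝ) : ℂ[X] :=
  C (2 * a 0 : ℂ) * X ^ n + ∑ k ∈ Finset.Icc 1 n,
    (C (a k - b k * Complex.I) * X ^ (n + k) + C (a k + b k * Complex.I) * X ^ (n - k))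

theorem trigSumPoly_term_eval {n k : ℕ} (hk : k ≤ n) (α β x : ℝ) :
    (α - β * Complex.I) * Complex.exp (x * Complex.I) ^ (n + k)
      + (α + β * Complex.I) * Complex.exp (x * Complex.I) ^ (n - k)
      = 2 * Complex.exp (x * Complex.I) ^ n * (α * cos (k * x) + β * sin (k * x) : ℝ) := by
  set u := Complex.exp (x * Complex.I)
  have hw : u ^ k = cos (k * x) + sin (k * x) * Complex.I := by
    rw [← Complex.exp_nat_mul, ← mul_assoc, ← Complex.ofReal_natCast, ← Complex.ofReal_mul,
      Complex.exp_mul_I, ← Complex.ofReal_cos, ← Complex.ofReal_sin]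
  have hcs : (sin (k * x) : ℂ) ^ 2 + (cos (k * x) : ℂ) ^ 2 = 1 := by
    exact_mod_cast sin_sq_add_cos_sq (k * x)
  have h1 : u ^ (n + k) = u ^ (n - k) * u ^ k * u ^ k := by
    rw [← pow_add, ← pow_add]; congr 1; omega
  have h2 : u ^ n = u ^ (n - k) * u ^ k := by
    rw [← pow_add]; congr 1; omega
  rw [h1, h2, hw]
  simp only [Complex.ofReal_add, Complex.ofReal_mul]
  -- `w = u ^ k` satisfies `w² + 1 = 2 w cos kx` and `w² - 1 = 2i w sin kx`.
  linear_combination u ^ (n - k) * (α * (sin (k * x) : ℂ) ^ 2 - 2 * β * cos (k * x) * sin (k * x)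
    - β * (sin (k * x) : ℂ) ^ 2 * Complex.I) * Complex.I_sq - u ^ (n - k) * (α + β * Complex.I) * hcs

theorem trigSumPoly_eval_exp (n : ℕ) (a b : ℕ → ℝ) (x : ℝ) :
    (trigSumPoly n a b).eval (Complex.exp (x * Complex.I))
      = 2 * Complex.exp (x * Complex.I) ^ n * trigSum n a b x := by
  simp only [trigSumPoly, trigSum, eval_add, eval_mul, eval_C, eval_pow, eval_X, eval_finsetSum]
  rw [Complex.ofReal_add, Complex.ofReal_sum, mul_add, Finset.mul_sum]
  congr 1
  · ring
  · exact Finset.sum_congr rfl fun k hk => trigSumPoly_term_eval (Finset.mem_Icc.1 hk).2 _ _ x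

theorem natDegree_trigSumPoly_le (n : ℕ) (a b : ℕ → ℝ) : (trigSumPoly n a b).natDegree ≤ 2 * n := by
  refine natDegree_add_le_of_degree_le ((natDegree_C_mul_X_pow_le _ _).trans (by omega))
    (natDegree_sum_le_of_forall_le _ _ fun k hk => natDegree_add_le_of_degree_le
      ((natDegree_C_mul_X_pow_le _ _).trans ?_) ((natDegree_C_mul_X_pow_le _ _).trans (by omega)))
  have := (Finset.mem_Icc.1 hk).2
  omega

theorem coeff_trigSumPoly_two_mul {n : ℕ} (hn : 0 < n) (a b : ℕ → ℝ) :
    (trigSumPoly n a b).coeff (2 * n) = a n - b n * Complex.I := by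
  simp only [trigSumPoly, coeff_add, coeff_C_mul, coeff_X_pow, finsetSum_coeff]
  rw [Finset.sum_eq_single n]
  · simp [show n ≠ 0 by omega, two_mul]
  · intro k hk hkn
    have := (Finset.mem_Icc.1 hk).2
    simp [show 2 * n ≠ n + k by omega, show 2 * n ≠ n - k by omega]
  · exact fun h => absurd (Finset.mem_Icc.2 ⟨hn, le_rfl⟩) h

theorem trigSumPoly_ne_zero {n : ℕ} (hn : 0 < n) {a b : ℕ → ℝ} (hab : a n ^ 2 + b n ^ 2 ≠ 0) :
    trigSumPoly n a b ≠ 0 := by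
  intro h
  have hcoeff := coeff_trigSumPoly_two_mul hn a b
  rw [h, coeff_zero, eq_comm, Complex.ext_iff] at hcoeff
  simp only [Complex.sub_re, Complex.ofReal_re, Complex.mul_re, Complex.I_re, Complex.ofReal_im,
    Complex.I_im, Complex.sub_im, Complex.mul_im, Complex.zero_re, Complex.zero_im] at hcoeff
  apply hab
  rw [show a n = 0 by linarith [hcoeff.1], show b n = 0 by linarith [hcoeff.2]]
  ring

theorem injOn_exp_mul_I_Ico : InjOn (fun x : ℝ => Complex.exp (x * Complex.I)) (Ico 0 (2 * π)) :=
  fun _ hx _ hy h =>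
    Circle.exp_injOn_Ico (by simp) hx hy (Circle.ext (by simpa [Circle.coe_exp] using h))

theorem encard_zeros_trigSum_le {n : ℕ} (hn : 0 < n) {a b : ℕ → ℝ}
    (hab : a n ^ 2 + b n ^ 2 ≠ 0) :
    {x ∈ Ico 0 (2 * π) | trigSum n a b x = 0}.encard ≤ (2 * n : ℕ) := by
  have hP := trigSumPoly_ne_zero hn hab
  calc _ ≤ ((trigSumPoly n a b).roots.toFinset : Set ℂ).encard := by
        refine encard_le_encard_of_injOn (fun x hx => ?_)
          (injOn_exp_mul_I_Ico.mono fun x hx => hx.1)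
        rw [Finset.mem_coe, Multiset.mem_toFinset, mem_roots hP, IsRoot, trigSumPoly_eval_exp,
          hx.2, Complex.ofReal_zero, mul_zero]
    _ ≤ (2 * n : ℕ) := by
        rw [encard_coe_eq_coe_finsetCard, Nat.cast_le]
        exact (Multiset.toFinset_card_le _).trans
          ((card_roots' _).trans (natDegree_trigSumPoly_le n a b))

/-- If a real trigonometric polynomial `f` of degree `n ≥ 1` (so
`aₙ² + bₙ² ≠ 0`) has exactly `2n` distinct real zeros in `[0, 2π)`, then its
derivative `f'` is again a trigonometric polynomial of degree `n` and also has
exactly `2n` distinct real zeros in `[0, 2π)`. -/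
theorem deriv_trig_poly_max_zeros
    (n : ℕ) (hn : 0 < n) (a b : ℕ → ℝ) (f : ℝ → ℝ)
    (hf : ∀ x : ℝ, f x = a 0 + ∑ k ∈ Finset.Icc 1 n,
      (a k * Real.cos (k * x) + b k * Real.sin (k * x)))
    (htop : a n ^ 2 + b n ^ 2 ≠ 0)
    (hzeros : {x ∈ Set.Ico (0 : ℝ) (2 * π) | f x = 0}.encard = ((2 * n : ℕ) : ℕ∞)) :
    ∃ c d : ℕ → ℝ,
      (∀ x : ℝ, deriv f x = c 0 + ∑ k ∈ Finset.Icc 1 n,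
        (c k * Real.cos (k * x) + d k * Real.sin (k * x))) ∧
      c n ^ 2 + d n ^ 2 ≠ 0 ∧
      {x ∈ Set.Ico (0 : ℝ) (2 * π) | deriv f x = 0}.encard = ((2 * n : ℕ) : ℕ∞) := by
  obtain rfl : f = trigSum n a b := funext hf
  have hlead : ((n : ℝ) * b n) ^ 2 + (-(n * a n)) ^ 2 ≠ 0 := by
    rw [show ((n : ℝ) * b n) ^ 2 + (-(n * a n)) ^ 2 = (n : ℝ) ^ 2 * (a n ^ 2 + b n ^ 2) by ring]
    exact mul_ne_zero (by positivity) htop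
  refine ⟨fun k => k * b k, fun k => -(k * a k), fun x => by rw [deriv_trigSum]; rfl, hlead, ?_⟩
  have hcont : Continuous (trigSum n a b) :=
    Differentiable.continuous fun x => (hasDerivAt_trigSum n a b x).differentiableAt
  refine le_antisymm ?_ (hzeros ▸ (periodic_trigSum n a b).encard_zeros_le_encard_zeros_deriv
    two_pi_pos hcont (finite_of_encard_eq_coe hzeros))
  rw [deriv_trigSum]
  exact encard_zeros_trigSum_le hn hlead
end
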